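/- arXiv:math/0511443 — 9 statements merged into one kernel-verified Lean document; each statement's English description precedes it below -/
import Mathlib

section
/- For all (u,v) ∈ ℝ², the vector Ĩ(u,v) ∈ ℝ⁶ has Euclidean norm 1 and satisfies r·Ĩ₁(u,v) + k·Ĩ₂(u,v) = 0, where Ĩ₁, Ĩ₂ are its first two coordinates. Consequently the bipolar surface τ̃_{r,k} lies in the intersection of the unit sphere S⁵ with a fixed 5-dimensional linear subspace of ℝ⁶, i.e., in a totally geodesic S⁴ ⊂ S⁵. -/
/-!
Write `c = cos v`, `s = sin v`. The last four coordinates of `D · Ĩ` are `r c² A + k s² B`, where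
`A = (-sin ku cos ru, sin ru cos ku, -sin ku sin ru, cos ku cos ru)` and
`B = (-sin ru cos ku, sin ku cos ru, cos ru cos ku, -sin ru sin ku)` are orthonormal. Together with the
first two coordinates `(-k s c, r s c)` this gives `|D · Ĩ|² = r² c⁴ + k² s⁴ + (r² + k²) s² c² = D²`.
The relation `r Ĩ₁ + k Ĩ₂ = 0` is immediate from the first two coordinates.
-/

open Real

/-- The normalizing factor `D(v) = sqrt(r²cos²v + k²sin²v)`. -/
noncomputable def lawsonD (r k : ℝ) (v : ℝ) : ℝ :=
  Real.sqrt (r ^ 2 * cos v ^ 2 + k ^ 2 * sin v ^ 2)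

/-- The bipolar surface map `Ĩ : ℝ² → ℝ⁶` of the Lawson surface `τ_{r,k}`. -/
noncomputable def bipolarI (r k : ℝ) (u v : ℝ) : Fin 6 → ℝ := fun i =>
  ![-(k * sin v * cos v),
    r * sin v * cos v,
    -(r * cos v ^ 2 * sin (k * u) * cos (r * u)) - k * sin v ^ 2 * sin (r * u) * cos (k * u),
    r * cos v ^ 2 * sin (r * u) * cos (k * u) + k * sin v ^ 2 * sin (k * u) * cos (r * u),
    -(r * cos v ^ 2 * sin (k * u) * sin (r * u)) + k * sin v ^ 2 * cos (r * u) * cos (k * u),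
    r * cos v ^ 2 * cos (k * u) * cos (r * u) - k * sin v ^ 2 * sin (r * u) * sin (k * u)] i
    / lawsonD r k v

lemma lawsonD_sq (r k v : ℝ) : lawsonD r k v ^ 2 = r ^ 2 * cos v ^ 2 + k ^ 2 * sin v ^ 2 :=
  Real.sq_sqrt (by positivity)

lemma lawsonD_sq_pos {r k : ℝ} (hr : r ≠ 0) (hk : k ≠ 0) (v : ℝ) : 0 < lawsonD r k v ^ 2 := by
  rw [lawsonD_sq]
  rcases (sq_nonneg (cos v)).eq_or_lt with hc | hc
  · have hs : sin v ^ 2 = 1 := by linarith [sin_sq_add_cos_sq v]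
    rw [← hc, hs]
    positivity
  · positivity

lemma sum_sq_bipolarI (r k u v : ℝ) :
    ∑ i, bipolarI r k u v i ^ 2 = lawsonD r k v ^ 2 / lawsonD r k v ^ 2 := by
  simp only [Fin.sum_univ_six, bipolarI, div_pow, ← add_div]
  congr 1
  rw [lawsonD_sq]
  simp only [Matrix.cons_val]
  linear_combination
    ((r ^ 2 * cos v ^ 4 + k ^ 2 * sin v ^ 4) * (sin (r * u) ^ 2 + cos (r * u) ^ 2)) *
        sin_sq_add_cos_sq (k * u) +
      (r ^ 2 * cos v ^ 4 + k ^ 2 * sin v ^ 4) * sin_sq_add_cos_sq (r * u) +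
      (r ^ 2 * cos v ^ 2 + k ^ 2 * sin v ^ 2) * sin_sq_add_cos_sq v

lemma mul_bipolarI_zero_add_mul_bipolarI_one (r k u v : ℝ) :
    r * bipolarI r k u v 0 + k * bipolarI r k u v 1 = 0 := by
  simp only [bipolarI, Matrix.cons_val]
  ring

/-- `Ĩ` has unit norm and its first two coordinates satisfy `r·Ĩ₁ + k·Ĩ₂ = 0`,
so the bipolar surface lies in a totally geodesic `S⁴ ⊂ S⁵`. -/
theorem stmt_1 (r k : ℤ) (hk : 0 < k) (hrk : k < r) (u v : ℝ) :
    (∑ i : Fin 6, bipolarI r k u v i ^ 2 = 1) ∧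
    (r : ℝ) * bipolarI r k u v 0 + (k : ℝ) * bipolarI r k u v 1 = 0 := by
  have hr : (r : ℝ) ≠ 0 := by exact_mod_cast (hk.trans hrk).ne'
  have hk' : (k : ℝ) ≠ 0 := by exact_mod_cast hk.ne'
  exact ⟨by rw [sum_sq_bipolarI, div_self (lawsonD_sq_pos hr hk' v).ne'],
    mul_bipolarI_zero_add_mul_bipolarI_one _ _ u v⟩
end

section
/- If twice differentiable functions φ₁, φ₂ : ℝ → ℝ satisfy φ₁''(y) = (m² − 2(m²φ₁² + n²φ₂²))φ₁ and φ₂''(y) = (n² − 2(m²φ₁² + n²φ₂²))φ₂ for all y, then the quantity E₁(y) = (m²φ₁(y)² + n²φ₂(y)²)² − (m⁴φ₁(y)² + n⁴φ₂(y)²) + m²(φ₁'(y))² + n²(φ₂'(y))² is constant in y (E₁ is a first integral of the system). -/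
/-!
Along any twice differentiable curve, the derivative of `E₁` is a combination of the two
residuals of the system, weighted by `2 m² φ₁'` and `2 n² φ₂'`: the potential part of `E₁`
has partial derivatives `-2m²(m² - 2S)φ₁` and `-2n²(n² - 2S)φ₂`, where
`S = m²φ₁² + n²φ₂²`. So `E₁` has zero derivative on solutions and is constant.
-/

noncomputable def firstIntegral (m n : ℝ) (φ₁ φ₂ : ℝ → ℝ) (y : ℝ) : ℝ :=
  (m ^ 2 * φ₁ y ^ 2 + n ^ 2 * φ₂ y ^ 2) ^ 2 - (m ^ 4 * φ₁ y ^ 2 + n ^ 4 * φ₂ y ^ 2)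
    + m ^ 2 * (deriv φ₁ y) ^ 2 + n ^ 2 * (deriv φ₂ y) ^ 2

theorem hasDerivAt_firstIntegral (m n : ℝ) {φ₁ φ₂ : ℝ → ℝ} {y : ℝ}
    (hφ₁ : DifferentiableAt ℝ φ₁ y) (hφ₁' : DifferentiableAt ℝ (deriv φ₁) y)
    (hφ₂ : DifferentiableAt ℝ φ₂ y) (hφ₂' : DifferentiableAt ℝ (deriv φ₂) y) :
    HasDerivAt (firstIntegral m n φ₁ φ₂)
      (2 * m ^ 2 * deriv φ₁ y * (deriv (deriv φ₁) y
          - (m ^ 2 - 2 * (m ^ 2 * φ₁ y ^ 2 + n ^ 2 * φ₂ y ^ 2)) * φ₁ y)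
        + 2 * n ^ 2 * deriv φ₂ y * (deriv (deriv φ₂) y
          - (n ^ 2 - 2 * (m ^ 2 * φ₁ y ^ 2 + n ^ 2 * φ₂ y ^ 2)) * φ₂ y)) y := by
  have h₁ := hφ₁.hasDerivAt.fun_pow 2
  have h₂ := hφ₂.hasDerivAt.fun_pow 2
  have hS := (h₁.const_mul (m ^ 2)).add (h₂.const_mul (n ^ 2))
  have hV := (hS.fun_pow 2).sub ((h₁.const_mul (m ^ 4)).add (h₂.const_mul (n ^ 4)))
  have hE := (hV.add ((hφ₁'.hasDerivAt.fun_pow 2).const_mul (m ^ 2))).add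
    ((hφ₂'.hasDerivAt.fun_pow 2).const_mul (n ^ 2))
  refine hE.congr_deriv ?_
  simp only [Nat.cast_ofNat, Nat.reduceSub, pow_one, Pi.add_apply]
  ring

theorem firstIntegral_eq_of_solution (m n : ℝ) {φ₁ φ₂ : ℝ → ℝ}
    (hφ₁ : Differentiable ℝ φ₁) (hφ₁' : Differentiable ℝ (deriv φ₁))
    (hφ₂ : Differentiable ℝ φ₂) (hφ₂' : Differentiable ℝ (deriv φ₂))
    (ode₁ : ∀ y, deriv (deriv φ₁) y =
      (m ^ 2 - 2 * (m ^ 2 * φ₁ y ^ 2 + n ^ 2 * φ₂ y ^ 2)) * φ₁ y)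
    (ode₂ : ∀ y, deriv (deriv φ₂) y =
      (n ^ 2 - 2 * (m ^ 2 * φ₁ y ^ 2 + n ^ 2 * φ₂ y ^ 2)) * φ₂ y) (y z : ℝ) :
    firstIntegral m n φ₁ φ₂ y = firstIntegral m n φ₁ φ₂ z := by
  have hE : ∀ x, HasDerivAt (firstIntegral m n φ₁ φ₂) 0 x := fun x => by
    simpa [ode₁ x, ode₂ x] using hasDerivAt_firstIntegral m n (hφ₁ x) (hφ₁' x) (hφ₂ x) (hφ₂' x)
  exact is_const_of_deriv_eq_zero (fun x => (hE x).differentiableAt) (fun x => (hE x).deriv) y z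

theorem stmt_5_general (n m : ℝ) (φ₁ φ₂ : ℝ → ℝ)
    (hφ₁ : Differentiable ℝ φ₁) (hφ₁' : Differentiable ℝ (deriv φ₁))
    (hφ₂ : Differentiable ℝ φ₂) (hφ₂' : Differentiable ℝ (deriv φ₂))
    (ode₁ : ∀ y, deriv (deriv φ₁) y =
      (m ^ 2 - 2 * (m ^ 2 * φ₁ y ^ 2 + n ^ 2 * φ₂ y ^ 2)) * φ₁ y)
    (ode₂ : ∀ y, deriv (deriv φ₂) y =
      (n ^ 2 - 2 * (m ^ 2 * φ₁ y ^ 2 + n ^ 2 * φ₂ y ^ 2)) * φ₂ y) :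
    ∀ y z : ℝ,
      (m ^ 2 * φ₁ y ^ 2 + n ^ 2 * φ₂ y ^ 2) ^ 2 - (m ^ 4 * φ₁ y ^ 2 + n ^ 4 * φ₂ y ^ 2)
        + m ^ 2 * (deriv φ₁ y) ^ 2 + n ^ 2 * (deriv φ₂ y) ^ 2 =
      (m ^ 2 * φ₁ z ^ 2 + n ^ 2 * φ₂ z ^ 2) ^ 2 - (m ^ 4 * φ₁ z ^ 2 + n ^ 4 * φ₂ z ^ 2)
        + m ^ 2 * (deriv φ₁ z) ^ 2 + n ^ 2 * (deriv φ₂ z) ^ 2 :=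
  firstIntegral_eq_of_solution m n hφ₁ hφ₁' hφ₂ hφ₂' ode₁ ode₂

/-- `E₁` is a first integral of the minimal-surface ODE system. -/
theorem stmt_5 (n m : ℝ) (hm : 0 < m) (hmn : m < n) (φ₁ φ₂ : ℝ → ℝ)
    (hφ₁ : Differentiable ℝ φ₁) (hφ₁' : Differentiable ℝ (deriv φ₁))
    (hφ₂ : Differentiable ℝ φ₂) (hφ₂' : Differentiable ℝ (deriv φ₂))
    (ode₁ : ∀ y, deriv (deriv φ₁) y =
      (m ^ 2 - 2 * (m ^ 2 * φ₁ y ^ 2 + n ^ 2 * φ₂ y ^ 2)) * φ₁ y)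
    (ode₂ : ∀ y, deriv (deriv φ₂) y =
      (n ^ 2 - 2 * (m ^ 2 * φ₁ y ^ 2 + n ^ 2 * φ₂ y ^ 2)) * φ₂ y) :
    ∀ y z : ℝ,
      (m ^ 2 * φ₁ y ^ 2 + n ^ 2 * φ₂ y ^ 2) ^ 2 - (m ^ 4 * φ₁ y ^ 2 + n ^ 4 * φ₂ y ^ 2)
        + m ^ 2 * (deriv φ₁ y) ^ 2 + n ^ 2 * (deriv φ₂ y) ^ 2 =
      (m ^ 2 * φ₁ z ^ 2 + n ^ 2 * φ₂ z ^ 2) ^ 2 - (m ^ 4 * φ₁ z ^ 2 + n ^ 4 * φ₂ z ^ 2)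
        + m ^ 2 * (deriv φ₁ z) ^ 2 + n ^ 2 * (deriv φ₂ z) ^ 2 :=
  stmt_5_general n m φ₁ φ₂ hφ₁ hφ₁' hφ₂ hφ₂' ode₁ ode₂
end

section
/- If twice differentiable functions φ₁, φ₂ : ℝ → ℝ satisfy φ₁''(y) = (m² − 2(m²φ₁² + n²φ₂²))φ₁ and φ₂''(y) = (n² − 2(m²φ₁² + n²φ₂²))φ₂ for all y, then the quantity E₂(y) = n²(n²−m²)φ₂²(φ₂² − 1) + m²(n²−m²)φ₂²φ₁² + m²φ₂²(φ₁')² − 2m²φ₁φ₂φ₁'φ₂' + (φ₂')²((n²−m²) + m²φ₁²) is constant in y (E₂ is a second, independent first integral of the system). -/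
/-!
Write `k = n² - m²`, `W = φ₂ φ₁' - φ₁ φ₂'` and `F = φ₂'² + n² φ₂⁴ - n² φ₂² + m² φ₁² φ₂²`.
Completing the square in the `φ₁'` terms gives `E₂ = k F + m² W²`. Since both equations share the
potential `2(m² φ₁² + n² φ₂²)`, the Wronskian-type quantity `W` satisfies `W' = -k φ₁ φ₂`, while the
equation for `φ₂` gives `F' = 2 m² φ₁ φ₂ W`; the two contributions to `E₂'` cancel.
-/

lemma hasDerivAt_wronskian_of_common_potential {f g f' g' : ℝ → ℝ} {a b V x : ℝ}
    (hf : HasDerivAt f (f' x) x) (hg : HasDerivAt g (g' x) x)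
    (hf' : HasDerivAt f' ((a - V) * f x) x) (hg' : HasDerivAt g' ((b - V) * g x) x) :
    HasDerivAt (fun y => g y * f' y - f y * g' y) ((a - b) * f x * g x) x :=
  ((hg.mul hf').sub (hf.mul hg')).congr_deriv (by ring)

lemma hasDerivAt_minimalSurface_energy {m n x : ℝ} {φ₁ φ₂ ψ₁ ψ₂ : ℝ → ℝ}
    (h₁ : HasDerivAt φ₁ (ψ₁ x) x) (h₂ : HasDerivAt φ₂ (ψ₂ x) x)
    (h₂' : HasDerivAt ψ₂ ((n ^ 2 - 2 * (m ^ 2 * φ₁ x ^ 2 + n ^ 2 * φ₂ x ^ 2)) * φ₂ x) x) :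
    HasDerivAt
      (fun y => ψ₂ y ^ 2 + n ^ 2 * φ₂ y ^ 4 - n ^ 2 * φ₂ y ^ 2 + m ^ 2 * φ₁ y ^ 2 * φ₂ y ^ 2)
      (2 * m ^ 2 * φ₁ x * φ₂ x * (φ₂ x * ψ₁ x - φ₁ x * ψ₂ x)) x :=
  (((((h₂'.pow 2).add ((h₂.pow 4).const_mul (n ^ 2))).sub ((h₂.pow 2).const_mul (n ^ 2))).add
    (((h₁.pow 2).const_mul (m ^ 2)).mul (h₂.pow 2)))).congr_deriv (by simp only [Pi.pow_apply]; ring)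

lemma hasDerivAt_minimalSurface_secondIntegral {m n x : ℝ} {φ₁ φ₂ ψ₁ ψ₂ : ℝ → ℝ}
    (h₁ : HasDerivAt φ₁ (ψ₁ x) x) (h₂ : HasDerivAt φ₂ (ψ₂ x) x)
    (h₁' : HasDerivAt ψ₁ ((m ^ 2 - 2 * (m ^ 2 * φ₁ x ^ 2 + n ^ 2 * φ₂ x ^ 2)) * φ₁ x) x)
    (h₂' : HasDerivAt ψ₂ ((n ^ 2 - 2 * (m ^ 2 * φ₁ x ^ 2 + n ^ 2 * φ₂ x ^ 2)) * φ₂ x) x) :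
    HasDerivAt
      (fun y => (n ^ 2 - m ^ 2) *
          (ψ₂ y ^ 2 + n ^ 2 * φ₂ y ^ 4 - n ^ 2 * φ₂ y ^ 2 + m ^ 2 * φ₁ y ^ 2 * φ₂ y ^ 2)
        + m ^ 2 * (φ₂ y * ψ₁ y - φ₁ y * ψ₂ y) ^ 2) 0 x := by
  have hW := hasDerivAt_wronskian_of_common_potential h₁ h₂ h₁' h₂'
  have hF := hasDerivAt_minimalSurface_energy h₁ h₂ h₂'
  exact ((hF.const_mul _).add ((hW.pow 2).const_mul _)).congr_deriv (by ring)

theorem stmt_6_general (n m : ℝ) (φ₁ φ₂ : ℝ → ℝ)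
    (hφ₁ : Differentiable ℝ φ₁) (hφ₁' : Differentiable ℝ (deriv φ₁))
    (hφ₂ : Differentiable ℝ φ₂) (hφ₂' : Differentiable ℝ (deriv φ₂))
    (ode₁ : ∀ y, deriv (deriv φ₁) y =
      (m ^ 2 - 2 * (m ^ 2 * φ₁ y ^ 2 + n ^ 2 * φ₂ y ^ 2)) * φ₁ y)
    (ode₂ : ∀ y, deriv (deriv φ₂) y =
      (n ^ 2 - 2 * (m ^ 2 * φ₁ y ^ 2 + n ^ 2 * φ₂ y ^ 2)) * φ₂ y) :
    ∀ y z : ℝ,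
      n ^ 2 * (n ^ 2 - m ^ 2) * φ₂ y ^ 2 * (φ₂ y ^ 2 - 1)
        + m ^ 2 * (n ^ 2 - m ^ 2) * φ₂ y ^ 2 * φ₁ y ^ 2
        + m ^ 2 * φ₂ y ^ 2 * (deriv φ₁ y) ^ 2
        - 2 * m ^ 2 * φ₁ y * φ₂ y * deriv φ₁ y * deriv φ₂ y
        + (deriv φ₂ y) ^ 2 * ((n ^ 2 - m ^ 2) + m ^ 2 * φ₁ y ^ 2) =
      n ^ 2 * (n ^ 2 - m ^ 2) * φ₂ z ^ 2 * (φ₂ z ^ 2 - 1)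
        + m ^ 2 * (n ^ 2 - m ^ 2) * φ₂ z ^ 2 * φ₁ z ^ 2
        + m ^ 2 * φ₂ z ^ 2 * (deriv φ₁ z) ^ 2
        - 2 * m ^ 2 * φ₁ z * φ₂ z * deriv φ₁ z * deriv φ₂ z
        + (deriv φ₂ z) ^ 2 * ((n ^ 2 - m ^ 2) + m ^ 2 * φ₁ z ^ 2) := by
  have hE (x : ℝ) := hasDerivAt_minimalSurface_secondIntegral (hφ₁ x).hasDerivAt
    (hφ₂ x).hasDerivAt (ode₁ x ▸ (hφ₁' x).hasDerivAt) (ode₂ x ▸ (hφ₂' x).hasDerivAt)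
  intro y z
  have hyz := is_const_of_deriv_eq_zero (fun x => (hE x).differentiableAt)
    (fun x => (hE x).deriv) y z
  linear_combination hyz

/-- `E₂` is a second first integral of the minimal-surface ODE system. -/
theorem stmt_6 (n m : ℝ) (hm : 0 < m) (hmn : m < n) (φ₁ φ₂ : ℝ → ℝ)
    (hφ₁ : Differentiable ℝ φ₁) (hφ₁' : Differentiable ℝ (deriv φ₁))
    (hφ₂ : Differentiable ℝ φ₂) (hφ₂' : Differentiable ℝ (deriv φ₂))
    (ode₁ : ∀ y, deriv (deriv φ₁) y =
      (m ^ 2 - 2 * (m ^ 2 * φ₁ y ^ 2 + n ^ 2 * φ₂ y ^ 2)) * φ₁ y)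
    (ode₂ : ∀ y, deriv (deriv φ₂) y =
      (n ^ 2 - 2 * (m ^ 2 * φ₁ y ^ 2 + n ^ 2 * φ₂ y ^ 2)) * φ₂ y) :
    ∀ y z : ℝ,
      n ^ 2 * (n ^ 2 - m ^ 2) * φ₂ y ^ 2 * (φ₂ y ^ 2 - 1)
        + m ^ 2 * (n ^ 2 - m ^ 2) * φ₂ y ^ 2 * φ₁ y ^ 2
        + m ^ 2 * φ₂ y ^ 2 * (deriv φ₁ y) ^ 2
        - 2 * m ^ 2 * φ₁ y * φ₂ y * deriv φ₁ y * deriv φ₂ y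
        + (deriv φ₂ y) ^ 2 * ((n ^ 2 - m ^ 2) + m ^ 2 * φ₁ y ^ 2) =
      n ^ 2 * (n ^ 2 - m ^ 2) * φ₂ z ^ 2 * (φ₂ z ^ 2 - 1)
        + m ^ 2 * (n ^ 2 - m ^ 2) * φ₂ z ^ 2 * φ₁ z ^ 2
        + m ^ 2 * φ₂ z ^ 2 * (deriv φ₁ z) ^ 2
        - 2 * m ^ 2 * φ₁ z * φ₂ z * deriv φ₁ z * deriv φ₂ z
        + (deriv φ₂ z) ^ 2 * ((n ^ 2 - m ^ 2) + m ^ 2 * φ₁ z ^ 2) :=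
  stmt_6_general n m φ₁ φ₂ hφ₁ hφ₁' hφ₂ hφ₂' ode₁ ode₂
end

section
/- If (φ₀, φ₁, φ₂) solves the minimal-surface ODE system with the standard initial conditions, then for all y ∈ ℝ: φ₀(y)² + φ₁(y)² + φ₂(y)² = 1 and 2φ₁(y)² + (2n²/(n²+m²))φ₀(y)² = 1; that is, the solution curve lies on the intersection of the unit sphere and the cylinder 2φ₁² + (2n²/(n²+m²))φ₀² = 1. -/
/-!
Write `Q = m²φ₁² + n²φ₂²`. Along a solution, `F = |φ|² - 1`, `U = φ·φ'` and `E = |φ'|² - Q`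
satisfy the linear system `F' = 2U`, `U' = E - 2QF`, `E' = -4QU` and vanish at `0`, so they vanish
identically by Grönwall. Once `U = 0`, the same holds for the cylinder defect
`G = 2φ₁² + cφ₀² - 1` with `c = 2n²/(n²+m²)`, `W = G'` and `V = 4φ₁'² + 2cφ₀'² + 4m²φ₁² - 4Q`:
`G' = W`, `W' = V - 4QG`, `V' = (2(m²+n²) - 4Q)W`.
-/

section Gronwall

open Set

variable {E : Type*} [NormedAddCommGroup E] [NormedSpace ℝ E]

theorem eq_zero_of_norm_deriv_le_mul_norm_of_nonneg {f f' : ℝ → E} {K : ℝ → ℝ}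
    (hK : Continuous K) (hf : ∀ t, HasDerivAt f (f' t) t)
    (bound : ∀ t, ‖f' t‖ ≤ K t * ‖f t‖) (h0 : f 0 = 0) {b : ℝ} (hb : 0 ≤ b) : f b = 0 := by
  obtain ⟨M, hM⟩ :=
    (isCompact_Icc (a := 0) (b := b)).exists_bound_of_continuousOn hK.continuousOn
  refine eq_zero_of_abs_deriv_le_mul_abs_self_of_eq_zero_right (K := M)
    (fun t _ ↦ (hf t).continuousAt.continuousWithinAt) (fun t _ ↦ (hf t).hasDerivWithinAt) h0
    (fun t ht ↦ ?_) b (right_mem_Icc.2 hb)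
  calc ‖f' t‖ ≤ K t * ‖f t‖ := bound t
    _ ≤ M * ‖f t‖ := by
      gcongr
      exact (le_abs_self _).trans (hM t (Ico_subset_Icc_self ht))

theorem eq_zero_of_norm_deriv_le_mul_norm {f f' : ℝ → E} {K : ℝ → ℝ}
    (hK : Continuous K) (hf : ∀ t, HasDerivAt f (f' t) t)
    (bound : ∀ t, ‖f' t‖ ≤ K t * ‖f t‖) (h0 : f 0 = 0) (t : ℝ) : f t = 0 := by
  rcases le_total 0 t with ht | ht
  · exact eq_zero_of_norm_deriv_le_mul_norm_of_nonneg hK hf bound h0 ht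
  · have hrev := eq_zero_of_norm_deriv_le_mul_norm_of_nonneg (f := fun s ↦ f (-s))
      (f' := fun s ↦ -f' (-s)) (hK.comp continuous_neg)
      (fun s ↦ by simpa [Function.comp_def] using (hf (-s)).scomp s (hasDerivAt_neg s))
      (fun s ↦ by simpa using bound (-s)) (by simpa using h0) (neg_nonneg.2 ht)
    simpa using hrev

end Gronwall

theorem abs_coords_le_norm (x : ℝ × ℝ × ℝ) :
    |x.1| ≤ ‖x‖ ∧ |x.2.1| ≤ ‖x‖ ∧ |x.2.2| ≤ ‖x‖ :=
  ⟨norm_fst_le x, (norm_fst_le x.2).trans (norm_snd_le x),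
    (norm_snd_le x.2).trans (norm_snd_le x)⟩

namespace MinimalSurface

variable (m n : ℝ) (φ₀ φ₁ φ₂ : ℝ → ℝ)

def weight (y : ℝ) : ℝ := m ^ 2 * φ₁ y ^ 2 + n ^ 2 * φ₂ y ^ 2

structure IsSolution : Prop where
  hasDerivAt₀ : ∀ y, HasDerivAt φ₀ (deriv φ₀ y) y
  hasDerivAt₁ : ∀ y, HasDerivAt φ₁ (deriv φ₁ y) y
  hasDerivAt₂ : ∀ y, HasDerivAt φ₂ (deriv φ₂ y) y
  hasDerivAt_deriv₀ : ∀ y, HasDerivAt (deriv φ₀) (-2 * weight m n φ₁ φ₂ y * φ₀ y) y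
  hasDerivAt_deriv₁ : ∀ y, HasDerivAt (deriv φ₁) ((m ^ 2 - 2 * weight m n φ₁ φ₂ y) * φ₁ y) y
  hasDerivAt_deriv₂ : ∀ y, HasDerivAt (deriv φ₂) ((n ^ 2 - 2 * weight m n φ₁ φ₂ y) * φ₂ y) y

/-- The standard initial conditions with the square roots squared away. -/
structure StandardInitialData : Prop where
  sq₀ : φ₀ 0 ^ 2 = (n ^ 2 + m ^ 2) / (2 * n ^ 2)
  eq₁ : φ₁ 0 = 0
  sq₂ : φ₂ 0 ^ 2 = (n ^ 2 - m ^ 2) / (2 * n ^ 2)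
  deriv₀ : deriv φ₀ 0 = 0
  derivSq₁ : deriv φ₁ 0 ^ 2 = (n ^ 2 - m ^ 2) / 2
  deriv₂ : deriv φ₂ 0 = 0

noncomputable def sphereData (y : ℝ) : ℝ × ℝ × ℝ :=
  (φ₀ y ^ 2 + φ₁ y ^ 2 + φ₂ y ^ 2 - 1,
    φ₀ y * deriv φ₀ y + φ₁ y * deriv φ₁ y + φ₂ y * deriv φ₂ y,
    deriv φ₀ y ^ 2 + deriv φ₁ y ^ 2 + deriv φ₂ y ^ 2 - weight m n φ₁ φ₂ y)

noncomputable def cylinderData (c y : ℝ) : ℝ × ℝ × ℝ :=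
  (2 * φ₁ y ^ 2 + c * φ₀ y ^ 2 - 1,
    4 * (φ₁ y * deriv φ₁ y) + 2 * c * (φ₀ y * deriv φ₀ y),
    4 * deriv φ₁ y ^ 2 + 2 * c * deriv φ₀ y ^ 2 + 4 * m ^ 2 * φ₁ y ^ 2
      - 4 * weight m n φ₁ φ₂ y)

def sphereField (q : ℝ) (x : ℝ × ℝ × ℝ) : ℝ × ℝ × ℝ :=
  (2 * x.2.1, x.2.2 - 2 * q * x.1, -4 * q * x.2.1)

def cylinderField (a q : ℝ) (x : ℝ × ℝ × ℝ) : ℝ × ℝ × ℝ :=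
  (x.2.1, x.2.2 - 4 * q * x.1, (a - 4 * q) * x.2.1)

variable {m n φ₀ φ₁ φ₂}

theorem norm_sphereField_le (q : ℝ) (x : ℝ × ℝ × ℝ) :
    ‖sphereField q x‖ ≤ (2 + 4 * |q|) * ‖x‖ := by
  obtain ⟨h₀, h₁, h₂⟩ := abs_coords_le_norm x
  have hx := norm_nonneg x
  have hq := abs_nonneg q
  have hqx := mul_nonneg hq hx
  have h₀' := mul_le_mul_of_nonneg_left h₀ hq
  have h₁' := mul_le_mul_of_nonneg_left h₁ hq
  simp only [sphereField, norm_prod_le_iff, Real.norm_eq_abs, abs_mul, abs_neg, abs_two,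
    abs_of_pos (by norm_num : (0 : ℝ) < 4)]
  refine ⟨by linarith, ?_, by linarith⟩
  calc |x.2.2 - 2 * q * x.1| ≤ |x.2.2| + 2 * |q| * |x.1| := by
        simpa [abs_mul] using abs_sub x.2.2 (2 * q * x.1)
    _ ≤ (2 + 4 * |q|) * ‖x‖ := by linarith

theorem norm_cylinderField_le (a q : ℝ) (x : ℝ × ℝ × ℝ) :
    ‖cylinderField a q x‖ ≤ (1 + |a| + 4 * |q|) * ‖x‖ := by
  obtain ⟨h₀, h₁, h₂⟩ := abs_coords_le_norm x
  have hx := norm_nonneg x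
  have hq := abs_nonneg q
  have hqx := mul_nonneg hq hx
  have h₀' := mul_le_mul_of_nonneg_left h₀ hq
  have h₁' := mul_le_mul_of_nonneg_left h₁ hq
  have h₁'' := mul_le_mul_of_nonneg_left h₁ (abs_nonneg a)
  have hax := mul_nonneg (abs_nonneg a) hx
  simp only [cylinderField, norm_prod_le_iff, Real.norm_eq_abs]
  refine ⟨by linarith, ?_, ?_⟩
  · calc |x.2.2 - 4 * q * x.1| ≤ |x.2.2| + 4 * |q| * |x.1| := by
          simpa [abs_mul] using abs_sub x.2.2 (4 * q * x.1)
      _ ≤ (1 + |a| + 4 * |q|) * ‖x‖ := by linarith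
  · calc |(a - 4 * q) * x.2.1| ≤ (|a| + 4 * |q|) * |x.2.1| := by
          rw [abs_mul]; gcongr; simpa [abs_mul] using abs_sub a (4 * q)
      _ ≤ (1 + |a| + 4 * |q|) * ‖x‖ := by linarith

namespace IsSolution

variable (h : IsSolution m n φ₀ φ₁ φ₂) (y : ℝ)
include h

theorem hasDerivAt_weight : HasDerivAt (weight m n φ₁ φ₂)
    (2 * m ^ 2 * φ₁ y * deriv φ₁ y + 2 * n ^ 2 * φ₂ y * deriv φ₂ y) y := by
  refine ((((h.hasDerivAt₁ y).fun_pow 2).const_mul (m ^ 2)).fun_add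
    (((h.hasDerivAt₂ y).fun_pow 2).const_mul (n ^ 2))).congr_deriv ?_
  push_cast
  ring

theorem hasDerivAt_sphereData : HasDerivAt (sphereData m n φ₀ φ₁ φ₂)
    (sphereField (weight m n φ₁ φ₂ y) (sphereData m n φ₀ φ₁ φ₂ y)) y := by
  have h₀ := h.hasDerivAt₀ y
  have h₁ := h.hasDerivAt₁ y
  have h₂ := h.hasDerivAt₂ y
  have h₀' := h.hasDerivAt_deriv₀ y
  have h₁' := h.hasDerivAt_deriv₁ y
  have h₂' := h.hasDerivAt_deriv₂ y
  have hF := (((h₀.fun_pow 2).fun_add (h₁.fun_pow 2)).fun_add (h₂.fun_pow 2)).sub_const 1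
  have hU := ((h₀.fun_mul h₀').fun_add (h₁.fun_mul h₁')).fun_add (h₂.fun_mul h₂')
  have hE := (((h₀'.fun_pow 2).fun_add (h₁'.fun_pow 2)).fun_add (h₂'.fun_pow 2)).fun_sub
    (h.hasDerivAt_weight y)
  refine (hF.prodMk (hU.prodMk hE)).congr_deriv ?_
  simp only [sphereField, sphereData, weight, Prod.mk.injEq]
  push_cast
  exact ⟨by ring, by ring, by ring⟩

theorem hasDerivAt_cylinderData {c : ℝ} (hc : c * (n ^ 2 + m ^ 2) = 2 * n ^ 2)
    (hU : φ₀ y * deriv φ₀ y + φ₁ y * deriv φ₁ y + φ₂ y * deriv φ₂ y = 0) :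
    HasDerivAt (cylinderData m n φ₀ φ₁ φ₂ c) (cylinderField (2 * (m ^ 2 + n ^ 2))
      (weight m n φ₁ φ₂ y) (cylinderData m n φ₀ φ₁ φ₂ c y)) y := by
  have h₀ := h.hasDerivAt₀ y
  have h₁ := h.hasDerivAt₁ y
  have h₀' := h.hasDerivAt_deriv₀ y
  have h₁' := h.hasDerivAt_deriv₁ y
  have hG := (((h₁.fun_pow 2).const_mul 2).fun_add ((h₀.fun_pow 2).const_mul c)).sub_const 1
  have hW := ((h₁.fun_mul h₁').const_mul 4).fun_add ((h₀.fun_mul h₀').const_mul (2 * c))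
  have hV := ((((h₁'.fun_pow 2).const_mul 4).fun_add
    ((h₀'.fun_pow 2).const_mul (2 * c))).fun_add ((h₁.fun_pow 2).const_mul (4 * m ^ 2))).fun_sub
    ((h.hasDerivAt_weight y).const_mul 4)
  refine (hG.prodMk (hW.prodMk hV)).congr_deriv ?_
  simp only [cylinderField, cylinderData, weight, Prod.mk.injEq]
  push_cast
  refine ⟨by ring, by ring, ?_⟩
  linear_combination (-8 * n ^ 2) * hU - 4 * φ₀ y * deriv φ₀ y * hc

theorem continuous_weight : Continuous (weight m n φ₁ φ₂) :=
  continuous_iff_continuousAt.2 fun y ↦ (h.hasDerivAt_weight y).continuousAt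

theorem sphereData_eq_zero (h0 : sphereData m n φ₀ φ₁ φ₂ 0 = 0) :
    sphereData m n φ₀ φ₁ φ₂ y = 0 :=
  eq_zero_of_norm_deriv_le_mul_norm
    (continuous_const.add (continuous_const.mul h.continuous_weight.abs))
    h.hasDerivAt_sphereData (fun _ ↦ norm_sphereField_le _ _) h0 y

theorem cylinderData_eq_zero {c : ℝ} (hc : c * (n ^ 2 + m ^ 2) = 2 * n ^ 2)
    (hsphere : sphereData m n φ₀ φ₁ φ₂ 0 = 0) (h0 : cylinderData m n φ₀ φ₁ φ₂ c 0 = 0) :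
    cylinderData m n φ₀ φ₁ φ₂ c y = 0 := by
  refine eq_zero_of_norm_deriv_le_mul_norm
    (continuous_const.add (continuous_const.mul h.continuous_weight.abs))
    (fun t ↦ h.hasDerivAt_cylinderData t hc ?_) (fun _ ↦ norm_cylinderField_le _ _ _) h0 y
  exact congrArg (fun x ↦ x.2.1) (h.sphereData_eq_zero t hsphere)

end IsSolution

namespace StandardInitialData

variable (h : StandardInitialData m n φ₀ φ₁ φ₂) (hn : n ≠ 0)
include h hn

theorem sphereData_zero : sphereData m n φ₀ φ₁ φ₂ 0 = 0 := by
  simp only [sphereData, weight, h.eq₁, h.deriv₀, h.deriv₂, h.sq₀, h.sq₂, h.derivSq₁,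
    Prod.mk_eq_zero]
  refine ⟨?_, by ring, ?_⟩ <;> field_simp <;> ring

theorem cylinderData_zero {c : ℝ} (hc : c * (n ^ 2 + m ^ 2) = 2 * n ^ 2) :
    cylinderData m n φ₀ φ₁ φ₂ c 0 = 0 := by
  simp only [cylinderData, weight, h.eq₁, h.deriv₀, h.sq₀, h.sq₂, h.derivSq₁, Prod.mk_eq_zero]
  refine ⟨?_, by ring, ?_⟩
  · rw [mul_div_assoc', hc]; field_simp; ring
  · field_simp; ring

end StandardInitialData

end MinimalSurface

open MinimalSurface

/-- A solution of the minimal-surface ODE system with the standard initial conditions lies on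
the intersection of the unit sphere and the cylinder `2φ₁² + (2n²/(n²+m²))φ₀² = 1`. -/
theorem stmt_7 (n m : ℝ) (hm : 0 < m) (hmn : m < n) (φ₀ φ₁ φ₂ : ℝ → ℝ)
    (hφ₀ : Differentiable ℝ φ₀) (hφ₀' : Differentiable ℝ (deriv φ₀))
    (hφ₁ : Differentiable ℝ φ₁) (hφ₁' : Differentiable ℝ (deriv φ₁))
    (hφ₂ : Differentiable ℝ φ₂) (hφ₂' : Differentiable ℝ (deriv φ₂))
    (ode₀ : ∀ y, deriv (deriv φ₀) y =
      -2 * (m ^ 2 * φ₁ y ^ 2 + n ^ 2 * φ₂ y ^ 2) * φ₀ y)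
    (ode₁ : ∀ y, deriv (deriv φ₁) y =
      (m ^ 2 - 2 * (m ^ 2 * φ₁ y ^ 2 + n ^ 2 * φ₂ y ^ 2)) * φ₁ y)
    (ode₂ : ∀ y, deriv (deriv φ₂) y =
      (n ^ 2 - 2 * (m ^ 2 * φ₁ y ^ 2 + n ^ 2 * φ₂ y ^ 2)) * φ₂ y)
    (init₀ : φ₀ 0 = Real.sqrt ((n ^ 2 + m ^ 2) / (2 * n ^ 2)))
    (init₁ : φ₁ 0 = 0)
    (init₂ : φ₂ 0 = Real.sqrt ((n ^ 2 - m ^ 2) / (2 * n ^ 2)))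
    (init₀' : deriv φ₀ 0 = 0)
    (init₁' : deriv φ₁ 0 = Real.sqrt ((n ^ 2 - m ^ 2) / 2))
    (init₂' : deriv φ₂ 0 = 0) :
    ∀ y : ℝ, φ₀ y ^ 2 + φ₁ y ^ 2 + φ₂ y ^ 2 = 1 ∧
      2 * φ₁ y ^ 2 + (2 * n ^ 2 / (n ^ 2 + m ^ 2)) * φ₀ y ^ 2 = 1 := by
  have hn : n ≠ 0 := (hm.trans hmn).ne'
  have hnm : 0 ≤ n ^ 2 - m ^ 2 := sub_nonneg.2 (pow_le_pow_left₀ hm.le hmn.le 2)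
  have hsol : IsSolution m n φ₀ φ₁ φ₂ :=
    ⟨fun y ↦ (hφ₀ y).hasDerivAt, fun y ↦ (hφ₁ y).hasDerivAt, fun y ↦ (hφ₂ y).hasDerivAt,
      fun y ↦ ode₀ y ▸ (hφ₀' y).hasDerivAt, fun y ↦ ode₁ y ▸ (hφ₁' y).hasDerivAt,
      fun y ↦ ode₂ y ▸ (hφ₂' y).hasDerivAt⟩
  have hinit : StandardInitialData m n φ₀ φ₁ φ₂ :=
    ⟨by rw [init₀, Real.sq_sqrt (by positivity)], init₁,
      by rw [init₂, Real.sq_sqrt (div_nonneg hnm (by positivity))],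
      init₀', by rw [init₁', Real.sq_sqrt (div_nonneg hnm (by positivity))], init₂'⟩
  have hc : 2 * n ^ 2 / (n ^ 2 + m ^ 2) * (n ^ 2 + m ^ 2) = 2 * n ^ 2 :=
    div_mul_cancel₀ _ (by positivity)
  have hsphere := hinit.sphereData_zero hn
  intro y
  have hF := congrArg Prod.fst (hsol.sphereData_eq_zero y hsphere)
  have hG := congrArg Prod.fst
    (hsol.cylinderData_eq_zero y hc hsphere (hinit.cylinderData_zero hn hc))
  simp only [sphereData, cylinderData, Prod.fst_zero, sub_eq_zero] at hF hG
  exact ⟨hF, hG⟩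
end

section
/- Define φ₀(y) = sqrt((n²+m²)/(2n²))·cos(θ(y)), φ₁(y) = (1/√2)·sin(θ(y)), and φ₂(y) = sqrt(n² − m²cos²(θ(y)))/(√2·n). Then (φ₀, φ₁, φ₂) solves the minimal-surface ODE system and satisfies the standard initial conditions. -/
/-!
Write `w = θ' = √(n² - m² cos² θ)`. Differentiating `w² = n² - m² cos² θ` gives `w' = m² cos θ sin θ`,
so `cos θ`, `sin θ` and `w` form a system closed under differentiation, with `(cos θ)' = -w sin θ`
and `(sin θ)' = w cos θ`. Each of `φ₀, φ₁, φ₂` is a constant multiple of one of these three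
functions, so their second derivatives are polynomials in `cos θ`, `sin θ`, `w`; the ODE system
then reduces, via `sin² θ + cos² θ = 1` and `2 (m² φ₁² + n² φ₂²) = m² sin² θ + w²`, to polynomial
identities.
-/

section Pendulum

open Real

lemma sub_mul_sq_pos {a b c : ℝ} (ha : 0 < a) (hba : b < a) (hc : c ^ 2 ≤ 1) :
    0 < a - b * c ^ 2 := by
  rcases le_or_gt b 0 with hb | hb <;> nlinarith [sq_nonneg c]

variable {a b : ℝ} {θ : ℝ → ℝ}

lemma sq_sqrt_sub_mul_cos_sq (ha : 0 < a) (hba : b < a) (x : ℝ) :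
    √(a - b * cos x ^ 2) ^ 2 = a - b * cos x ^ 2 :=
  sq_sqrt (sub_mul_sq_pos ha hba (cos_sq_le_one x)).le

lemma hasDerivAt_sqrt_sub_mul_cos_sq (ha : 0 < a) (hba : b < a)
    (hθ : ∀ y, HasDerivAt θ (√(a - b * cos (θ y) ^ 2)) y) (y : ℝ) :
    HasDerivAt (fun y => √(a - b * cos (θ y) ^ 2)) (b * cos (θ y) * sin (θ y)) y := by
  have hpos := sub_mul_sq_pos ha hba (cos_sq_le_one (θ y))
  have hsq : HasDerivAt (fun y => a - b * cos (θ y) ^ 2) _ y :=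
    ((hθ y).cos.pow 2).const_mul b |>.const_sub a
  convert hsq.sqrt hpos.ne' using 1
  field_simp
  push_cast
  ring

lemma deriv_cos_comp (hθ : ∀ y, HasDerivAt θ (√(a - b * cos (θ y) ^ 2)) y) :
    deriv (fun y => cos (θ y)) = fun y => -sin (θ y) * √(a - b * cos (θ y) ^ 2) :=
  funext fun y => (hθ y).cos.deriv

lemma deriv_sin_comp (hθ : ∀ y, HasDerivAt θ (√(a - b * cos (θ y) ^ 2)) y) :
    deriv (fun y => sin (θ y)) = fun y => cos (θ y) * √(a - b * cos (θ y) ^ 2) :=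
  funext fun y => (hθ y).sin.deriv

lemma deriv_sqrt_sub_mul_cos_sq (ha : 0 < a) (hba : b < a)
    (hθ : ∀ y, HasDerivAt θ (√(a - b * cos (θ y) ^ 2)) y) :
    deriv (fun y => √(a - b * cos (θ y) ^ 2)) = fun y => b * cos (θ y) * sin (θ y) :=
  funext fun y => (hasDerivAt_sqrt_sub_mul_cos_sq ha hba hθ y).deriv

variable (ha : 0 < a) (hba : b < a) (hθ : ∀ y, HasDerivAt θ (√(a - b * cos (θ y) ^ 2)) y)
include ha hba hθ

lemma deriv_deriv_cos_comp (y : ℝ) :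
    deriv (deriv fun y => cos (θ y)) y =
      -(a - b * cos (θ y) ^ 2 + b * sin (θ y) ^ 2) * cos (θ y) := by
  have h : HasDerivAt (fun y => -sin (θ y) * √(a - b * cos (θ y) ^ 2))
      (-(cos (θ y) * √(a - b * cos (θ y) ^ 2)) * √(a - b * cos (θ y) ^ 2) +
        -sin (θ y) * (b * cos (θ y) * sin (θ y))) y :=
    (hθ y).sin.neg.mul (hasDerivAt_sqrt_sub_mul_cos_sq ha hba hθ y)
  rw [deriv_cos_comp hθ, h.deriv]
  linear_combination (-cos (θ y)) * sq_sqrt_sub_mul_cos_sq ha hba (θ y)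

lemma deriv_deriv_sin_comp (y : ℝ) :
    deriv (deriv fun y => sin (θ y)) y =
      (b * cos (θ y) ^ 2 - (a - b * cos (θ y) ^ 2)) * sin (θ y) := by
  have h : HasDerivAt (fun y => cos (θ y) * √(a - b * cos (θ y) ^ 2)) _ y :=
    (hθ y).cos.mul (hasDerivAt_sqrt_sub_mul_cos_sq ha hba hθ y)
  rw [deriv_sin_comp hθ, h.deriv]
  linear_combination (-sin (θ y)) * sq_sqrt_sub_mul_cos_sq ha hba (θ y)

lemma deriv_deriv_sqrt_sub_mul_cos_sq (y : ℝ) :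
    deriv (deriv fun y => √(a - b * cos (θ y) ^ 2)) y =
      b * (cos (θ y) ^ 2 - sin (θ y) ^ 2) * √(a - b * cos (θ y) ^ 2) := by
  have h : HasDerivAt (fun y => b * cos (θ y) * sin (θ y)) _ y :=
    ((hθ y).cos.const_mul b).mul (hθ y).sin
  rw [deriv_sqrt_sub_mul_cos_sq ha hba hθ, h.deriv]
  ring

end Pendulum

lemma weighted_sq_sum_eq {n m s w : ℝ} (hn : n ≠ 0) :
    m ^ 2 * (1 / √2 * s) ^ 2 + n ^ 2 * (w / (√2 * n)) ^ 2 = (m ^ 2 * s ^ 2 + w ^ 2) / 2 := by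
  have h2 : √2 ^ 2 = 2 := Real.sq_sqrt zero_le_two
  field_simp
  rw [h2]
  ring

/-- The explicit functions built from the pendulum-type solution `θ` solve the
minimal-surface ODE system and satisfy the standard initial conditions. -/
theorem stmt_8 (n m : ℝ) (hm : 0 < m) (hmn : m < n) (θ : ℝ → ℝ)
    (hθ0 : θ 0 = 0) (hθdiff : Differentiable ℝ θ)
    (hθ' : ∀ y, deriv θ y = Real.sqrt (n ^ 2 - m ^ 2 * Real.cos (θ y) ^ 2))
    (φ₀ φ₁ φ₂ : ℝ → ℝ)
    (hφ₀ : φ₀ = fun y => Real.sqrt ((n ^ 2 + m ^ 2) / (2 * n ^ 2)) * Real.cos (θ y))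
    (hφ₁ : φ₁ = fun y => (1 / Real.sqrt 2) * Real.sin (θ y))
    (hφ₂ : φ₂ = fun y =>
      Real.sqrt (n ^ 2 - m ^ 2 * Real.cos (θ y) ^ 2) / (Real.sqrt 2 * n)) :
    (∀ y, deriv (deriv φ₀) y = -2 * (m ^ 2 * φ₁ y ^ 2 + n ^ 2 * φ₂ y ^ 2) * φ₀ y) ∧
    (∀ y, deriv (deriv φ₁) y =
      (m ^ 2 - 2 * (m ^ 2 * φ₁ y ^ 2 + n ^ 2 * φ₂ y ^ 2)) * φ₁ y) ∧
    (∀ y, deriv (deriv φ₂) y =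
      (n ^ 2 - 2 * (m ^ 2 * φ₁ y ^ 2 + n ^ 2 * φ₂ y ^ 2)) * φ₂ y) ∧
    φ₀ 0 = Real.sqrt ((n ^ 2 + m ^ 2) / (2 * n ^ 2)) ∧
    φ₁ 0 = 0 ∧
    φ₂ 0 = Real.sqrt ((n ^ 2 - m ^ 2) / (2 * n ^ 2)) ∧
    deriv φ₀ 0 = 0 ∧
    deriv φ₁ 0 = Real.sqrt ((n ^ 2 - m ^ 2) / 2) ∧
    deriv φ₂ 0 = 0 := by
  have hn : 0 < n := hm.trans hmn
  have hm2n2 : m ^ 2 < n ^ 2 := by gcongr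
  have hθ : ∀ y, HasDerivAt θ (Real.sqrt (n ^ 2 - m ^ 2 * Real.cos (θ y) ^ 2)) y :=
    fun y => hθ' y ▸ (hθdiff y).hasDerivAt
  have hn2 : 0 < n ^ 2 := by positivity
  have hw (y : ℝ) := sq_sqrt_sub_mul_cos_sq hn2 hm2n2 (θ y)
  have hdiv : ∀ f : ℝ → ℝ, (deriv fun y => f y / (√2 * n)) = fun y => deriv f y / (√2 * n) :=
    fun f => funext fun _ => deriv_div_const _
  have hnm : 0 ≤ n ^ 2 - m ^ 2 := sub_nonneg.2 hm2n2.le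
  subst hφ₀ hφ₁ hφ₂
  refine ⟨fun y => ?_, fun y => ?_, fun y => ?_, ?_, ?_, ?_, ?_, ?_, ?_⟩
  · simp only [deriv_const_mul_field', deriv_deriv_cos_comp hn2 hm2n2 hθ,
      weighted_sq_sum_eq hn.ne', hw]
    ring
  · simp only [deriv_const_mul_field', deriv_deriv_sin_comp hn2 hm2n2 hθ,
      weighted_sq_sum_eq hn.ne', hw]
    linear_combination (1 / √2 * m ^ 2 * Real.sin (θ y)) * Real.sin_sq_add_cos_sq (θ y)
  · simp only [hdiv, deriv_deriv_sqrt_sub_mul_cos_sq hn2 hm2n2 hθ,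
      weighted_sq_sum_eq hn.ne', hw]
    ring
  · simp [hθ0]
  · simp [hθ0]
  · simp only [hθ0, Real.cos_zero, one_pow, mul_one]
    rw [Real.sqrt_div hnm, Real.sqrt_mul zero_le_two, Real.sqrt_sq hn.le]
  · simp [deriv_const_mul_field', deriv_cos_comp hθ, hθ0]
  · simp only [deriv_const_mul_field', deriv_sin_comp hθ, hθ0, Real.cos_zero, one_pow, mul_one,
      one_mul, Real.sqrt_div hnm]
    ring
  · simp [deriv_sqrt_sub_mul_cos_sq hn2 hm2n2 hθ, hθ0]
end

section
/- Let a = ∫₀^{2π} dt / sqrt(n² − m²cos²(t)). Then θ(y + a) = θ(y) + 2π for all y ∈ ℝ. (Consequently cos∘θ and sin∘θ, and hence the associated solution (φ₀, φ₁, φ₂), are periodic with period a.) -/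
/-!
Separation of variables. Put `G x = ∫₀ˣ dt / f t` with `f t = sqrt (n² − m² cos² t) > 0`.
Along a solution of `θ' = f ∘ θ` the derivative of `G ∘ θ` is `1`, so `G (θ y) = y + G (θ 0)`.
Since `f` is `2π`-periodic, `G (x + 2π) = G x + a`, hence `G (θ (y + a)) = G (θ y + 2π)`,
and `G` is injective because it is strictly increasing.
-/

open Real

section AutonomousODE

variable {f : ℝ → ℝ}

theorem hasDerivAt_integral_inv (hf : Continuous f) (hne : ∀ x, f x ≠ 0) (x : ℝ) :
    HasDerivAt (fun x => ∫ t in (0 : ℝ)..x, (f t)⁻¹) (f x)⁻¹ x :=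
  have hcont : Continuous fun t => (f t)⁻¹ := hf.inv₀ hne
  intervalIntegral.integral_hasDerivAt_right (hcont.intervalIntegrable _ _)
    (hcont.stronglyMeasurableAtFilter _ _) hcont.continuousAt

theorem strictMono_integral_inv (hf : Continuous f) (hpos : ∀ x, 0 < f x) :
    StrictMono fun x => ∫ t in (0 : ℝ)..x, (f t)⁻¹ :=
  strictMono_of_deriv_pos fun x => by
    rw [(hasDerivAt_integral_inv hf (fun x => (hpos x).ne') x).deriv]
    exact inv_pos.mpr (hpos x)

theorem integral_inv_comp_solution (hf : Continuous f) (hne : ∀ x, f x ≠ 0) {θ : ℝ → ℝ}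
    (hθ : ∀ y, HasDerivAt θ (f (θ y)) y) (y : ℝ) :
    ∫ t in (0 : ℝ)..θ y, (f t)⁻¹ = y + ∫ t in (0 : ℝ)..θ 0, (f t)⁻¹ := by
  have hderiv : ∀ z, HasDerivAt (fun z => (∫ t in (0 : ℝ)..θ z, (f t)⁻¹) - z) 0 z := fun z => by
    have h := ((hasDerivAt_integral_inv hf hne (θ z)).comp z (hθ z)).sub (hasDerivAt_id z)
    rwa [inv_mul_cancel₀ (hne (θ z)), sub_self] at h
  have hconst := is_const_of_deriv_eq_zero (fun z => (hderiv z).differentiableAt)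
    (fun z => (hderiv z).deriv) y 0
  simp only [sub_zero] at hconst
  linarith

theorem solution_add_integral_inv_period (hf : Continuous f) (hpos : ∀ x, 0 < f x) {T : ℝ}
    (hT : Function.Periodic f T) {θ : ℝ → ℝ} (hθ : ∀ y, HasDerivAt θ (f (θ y)) y) (y : ℝ) :
    θ (y + ∫ t in (0 : ℝ)..T, (f t)⁻¹) = θ y + T := by
  have hne : ∀ x, f x ≠ 0 := fun x => (hpos x).ne'
  have hcont : Continuous fun t => (f t)⁻¹ := hf.inv₀ hne
  have hshift : ∫ t in (0 : ℝ)..θ y + T, (f t)⁻¹ =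
      (∫ t in (0 : ℝ)..θ y, (f t)⁻¹) + ∫ t in (0 : ℝ)..T, (f t)⁻¹ := by
    simpa only [zero_add, Function.comp_apply] using
      (hT.comp Inv.inv).intervalIntegral_add_eq_add 0 (θ y) fun _ _ => hcont.intervalIntegrable _ _
  apply (strictMono_integral_inv hf hpos).injective
  dsimp only
  rw [hshift, integral_inv_comp_solution hf hne hθ, integral_inv_comp_solution hf hne hθ y]
  ring

end AutonomousODE

theorem sub_mul_cos_sq_pos {n m : ℝ} (h : m ^ 2 < n ^ 2) (x : ℝ) :
    0 < n ^ 2 - m ^ 2 * cos x ^ 2 := by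
  nlinarith [cos_sq_le_one x, sq_nonneg m]

theorem stmt_9_general (n m : ℝ) (hm : 0 < m) (hmn : m < n) (θ : ℝ → ℝ)
    (hθdiff : Differentiable ℝ θ)
    (hθ' : ∀ y, deriv θ y = Real.sqrt (n ^ 2 - m ^ 2 * Real.cos (θ y) ^ 2))
    (a : ℝ) (ha : a = ∫ t in (0:ℝ)..(2 * π), 1 / Real.sqrt (n ^ 2 - m ^ 2 * Real.cos t ^ 2)) :
    ∀ y : ℝ, θ (y + a) = θ y + 2 * π := by
  intro y
  have hsq : m ^ 2 < n ^ 2 := by nlinarith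
  have hpos : ∀ x, 0 < √(n ^ 2 - m ^ 2 * cos x ^ 2) := fun x =>
    sqrt_pos.mpr (sub_mul_cos_sq_pos hsq x)
  have hcont : Continuous fun x => √(n ^ 2 - m ^ 2 * cos x ^ 2) := by fun_prop
  have hper : Function.Periodic (fun x => √(n ^ 2 - m ^ 2 * cos x ^ 2)) (2 * π) := fun x => by
    simp only [cos_add_two_pi]
  have hθ : ∀ z, HasDerivAt θ √(n ^ 2 - m ^ 2 * cos (θ z) ^ 2) z := fun z =>
    hθ' z ▸ (hθdiff z).hasDerivAt
  simp only [one_div] at ha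
  exact ha ▸ solution_add_integral_inv_period hcont hpos hper hθ y

/-- The angle function `θ` is quasi-periodic: `θ(y + a) = θ(y) + 2π`, where
`a = ∫₀^{2π} dt / sqrt(n² − m²cos²t)`. -/
theorem stmt_9 (n m : ℝ) (hm : 0 < m) (hmn : m < n) (θ : ℝ → ℝ)
    (hθ0 : θ 0 = 0) (hθdiff : Differentiable ℝ θ)
    (hθ' : ∀ y, deriv θ y = Real.sqrt (n ^ 2 - m ^ 2 * Real.cos (θ y) ^ 2))
    (a : ℝ) (ha : a = ∫ t in (0:ℝ)..(2 * π), 1 / Real.sqrt (n ^ 2 - m ^ 2 * Real.cos t ^ 2)) :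
    ∀ y : ℝ, θ (y + a) = θ y + 2 * π :=
  stmt_9_general n m hm hmn θ hθdiff hθ' a ha
end

section
/- If (φ₀, φ₁, φ₂) solves the minimal-surface ODE system with the standard initial conditions, then for all y ∈ ℝ: (φ₀'(y))² = (2n²m²/(n²+m²))φ₀(y)⁴ − (m²+n²)φ₀(y)² + (m²+n²)/2, (φ₁'(y))² = −2m²φ₁(y)⁴ + (2m²−n²)φ₁(y)² + (n²−m²)/2, and (φ₂'(y))² = −2n²φ₂(y)⁴ + (2n²−m²)φ₂(y)² + (m²−n²)/2. -/
/-!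
Let `u = φ₀² + φ₁² + φ₂² - 1`, `s = 2n²φ₀² + 2(m²+n²)φ₁² - (m²+n²)`, and let `a`, `b`, `c` be the
differences between the two sides of the three claimed identities. Along any solution, `u`,
`⟨φ, φ'⟩` and `|φ'|² - (m²φ₁² + n²φ₂²)` satisfy a linear homogeneous ODE; they vanish at `0`, so by
Grönwall's inequality the solution stays on the unit sphere `u = 0`. On the sphere, `s`, `s'` and
`4n²a + 4(m²+n²)b` satisfy another linear homogeneous ODE, so the solution also stays on the
quadric `s = 0`. Finally `a'`, `b'`, `c'` are combinations of `u` and `s`, so `a`, `b`, `c` are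
constant, and they vanish at `0`.
-/

open Set Matrix

theorem eq_zero_of_norm_deriv_le_of_le {E : Type*} [NormedAddCommGroup E] [NormedSpace ℝ E]
    {f f' : ℝ → E} {c : ℝ → ℝ} {t₀ : ℝ} (hf : ∀ t, HasDerivAt f (f' t) t) (hc : Continuous c)
    (hbound : ∀ t, ‖f' t‖ ≤ c t * ‖f t‖) (h₀ : f t₀ = 0) {t : ℝ} (ht : t₀ ≤ t) : f t = 0 := by
  obtain ⟨K, hK⟩ := isCompact_Icc.exists_bound_of_continuousOn (hc.continuousOn (s := Icc t₀ t))
  have hgronwall := norm_le_gronwallBound_of_norm_deriv_right_le (K := K) (ε := 0)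
    (fun s _ => (hf s).continuousAt.continuousWithinAt) (fun s _ => (hf s).hasDerivWithinAt)
    (by rw [h₀, norm_zero]) (fun s hs => ?_) t (right_mem_Icc.2 ht)
  · simpa [gronwallBound_ε0] using hgronwall
  · calc ‖f' s‖ ≤ c s * ‖f s‖ := hbound s
      _ ≤ K * ‖f s‖ + 0 := by
        rw [add_zero]
        exact mul_le_mul_of_nonneg_right ((le_abs_self _).trans (hK s (Ico_subset_Icc_self hs)))
          (norm_nonneg _)

theorem eq_zero_of_norm_deriv_le {E : Type*} [NormedAddCommGroup E] [NormedSpace ℝ E]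
    {f f' : ℝ → E} {c : ℝ → ℝ} {t₀ : ℝ} (hf : ∀ t, HasDerivAt f (f' t) t) (hc : Continuous c)
    (hbound : ∀ t, ‖f' t‖ ≤ c t * ‖f t‖) (h₀ : f t₀ = 0) : f = 0 := by
  funext t
  rcases le_total t₀ t with ht | ht
  · exact eq_zero_of_norm_deriv_le_of_le hf hc hbound h₀ ht
  · have hf_neg : ∀ s, HasDerivAt (fun s => f (-s)) (-f' (-s)) s := fun s => by
      simpa [Function.comp_def] using (hf (-s)).scomp s (hasDerivAt_neg s)
    simpa using eq_zero_of_norm_deriv_le_of_le hf_neg (hc.comp continuous_neg)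
      (fun s => by simpa using hbound (-s)) (by simpa using h₀) (neg_le_neg ht)

theorem Matrix.eq_zero_of_hasDerivAt_mulVec {ι : Type*} [Fintype ι] {A : ℝ → Matrix ι ι ℝ}
    {f : ℝ → ι → ℝ} {t₀ : ℝ} (hA : Continuous A) (hf : ∀ t, HasDerivAt f (A t *ᵥ f t) t)
    (h₀ : f t₀ = 0) : f = 0 :=
  let _ := Matrix.linftyOpNormedAddCommGroup (m := ι) (n := ι) (α := ℝ)
  eq_zero_of_norm_deriv_le hf hA.norm (fun _ => linfty_opNorm_mulVec _ _) h₀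

theorem hasDerivAt_vec3_mulVec {u v w : ℝ → ℝ} {a₀ a₁ a₂ b₀ b₁ b₂ c₀ c₁ c₂ t : ℝ}
    (hu : HasDerivAt u (a₀ * u t + a₁ * v t + a₂ * w t) t)
    (hv : HasDerivAt v (b₀ * u t + b₁ * v t + b₂ * w t) t)
    (hw : HasDerivAt w (c₀ * u t + c₁ * v t + c₂ * w t) t) :
    HasDerivAt (fun s => ![u s, v s, w s])
      (!![a₀, a₁, a₂; b₀, b₁, b₂; c₀, c₁, c₂] *ᵥ ![u t, v t, w t]) t :=
  hasDerivAt_pi.2 fun k => by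
    fin_cases k
    · simpa [mulVec, add_assoc] using hu
    · simpa [mulVec, add_assoc] using hv
    · simpa [mulVec, add_assoc] using hw

namespace MinimalSurfaceODE

structure IsSolution (m n : ℝ) (φ₀ φ₁ φ₂ : ℝ → ℝ) : Prop where
  hasDerivAt₀ : ∀ y, HasDerivAt φ₀ (deriv φ₀ y) y
  hasDerivAt₁ : ∀ y, HasDerivAt φ₁ (deriv φ₁ y) y
  hasDerivAt₂ : ∀ y, HasDerivAt φ₂ (deriv φ₂ y) y
  hasDerivAt_deriv₀ : ∀ y, HasDerivAt (deriv φ₀)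
    (-2 * (m ^ 2 * φ₁ y ^ 2 + n ^ 2 * φ₂ y ^ 2) * φ₀ y) y
  hasDerivAt_deriv₁ : ∀ y, HasDerivAt (deriv φ₁)
    ((m ^ 2 - 2 * (m ^ 2 * φ₁ y ^ 2 + n ^ 2 * φ₂ y ^ 2)) * φ₁ y) y
  hasDerivAt_deriv₂ : ∀ y, HasDerivAt (deriv φ₂)
    ((n ^ 2 - 2 * (m ^ 2 * φ₁ y ^ 2 + n ^ 2 * φ₂ y ^ 2)) * φ₂ y) y

noncomputable def sphereDefect (φ₀ φ₁ φ₂ : ℝ → ℝ) (y : ℝ) : ℝ := φ₀ y ^ 2 + φ₁ y ^ 2 + φ₂ y ^ 2 - 1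

noncomputable def quadricDefect (m n : ℝ) (φ₀ φ₁ : ℝ → ℝ) (y : ℝ) : ℝ :=
  2 * n ^ 2 * φ₀ y ^ 2 + 2 * (m ^ 2 + n ^ 2) * φ₁ y ^ 2 - (m ^ 2 + n ^ 2)

noncomputable def firstIntegral₀ (m n : ℝ) (φ₀ : ℝ → ℝ) (y : ℝ) : ℝ :=
  deriv φ₀ y ^ 2 - ((2 * n ^ 2 * m ^ 2 / (n ^ 2 + m ^ 2)) * φ₀ y ^ 4
    - (m ^ 2 + n ^ 2) * φ₀ y ^ 2 + (m ^ 2 + n ^ 2) / 2)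

noncomputable def firstIntegral₁ (m n : ℝ) (φ₁ : ℝ → ℝ) (y : ℝ) : ℝ :=
  deriv φ₁ y ^ 2 - (-2 * m ^ 2 * φ₁ y ^ 4 + (2 * m ^ 2 - n ^ 2) * φ₁ y ^ 2 + (n ^ 2 - m ^ 2) / 2)

noncomputable def firstIntegral₂ (m n : ℝ) (φ₂ : ℝ → ℝ) (y : ℝ) : ℝ :=
  deriv φ₂ y ^ 2 - (-2 * n ^ 2 * φ₂ y ^ 4 + (2 * n ^ 2 - m ^ 2) * φ₂ y ^ 2 + (m ^ 2 - n ^ 2) / 2)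

variable {m n : ℝ} {φ₀ φ₁ φ₂ : ℝ → ℝ}

namespace IsSolution

theorem continuous₀ (h : IsSolution m n φ₀ φ₁ φ₂) : Continuous φ₀ :=
  continuous_iff_continuousAt.2 fun y => (h.hasDerivAt₀ y).continuousAt

theorem continuous₁ (h : IsSolution m n φ₀ φ₁ φ₂) : Continuous φ₁ :=
  continuous_iff_continuousAt.2 fun y => (h.hasDerivAt₁ y).continuousAt

theorem continuous₂ (h : IsSolution m n φ₀ φ₁ φ₂) : Continuous φ₂ :=
  continuous_iff_continuousAt.2 fun y => (h.hasDerivAt₂ y).continuousAt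

theorem continuous_deriv₀ (h : IsSolution m n φ₀ φ₁ φ₂) : Continuous (deriv φ₀) :=
  continuous_iff_continuousAt.2 fun y => (h.hasDerivAt_deriv₀ y).continuousAt

theorem continuous_deriv₁ (h : IsSolution m n φ₀ φ₁ φ₂) : Continuous (deriv φ₁) :=
  continuous_iff_continuousAt.2 fun y => (h.hasDerivAt_deriv₁ y).continuousAt

theorem hasDerivAt_sphereDefect (h : IsSolution m n φ₀ φ₁ φ₂) (y : ℝ) :
    HasDerivAt (sphereDefect φ₀ φ₁ φ₂)
      (2 * (φ₀ y * deriv φ₀ y + φ₁ y * deriv φ₁ y + φ₂ y * deriv φ₂ y)) y := by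
  have := ((((h.hasDerivAt₀ y).pow 2).add ((h.hasDerivAt₁ y).pow 2)).add
    ((h.hasDerivAt₂ y).pow 2)).sub_const 1
  exact this.congr_deriv (by ring)

theorem hasDerivAt_quadricDefect (h : IsSolution m n φ₀ φ₁ φ₂) (y : ℝ) :
    HasDerivAt (quadricDefect m n φ₀ φ₁)
      (4 * (n ^ 2 * (φ₀ y * deriv φ₀ y) + (m ^ 2 + n ^ 2) * (φ₁ y * deriv φ₁ y))) y := by
  have := ((((h.hasDerivAt₀ y).pow 2).const_mul (2 * n ^ 2)).add
    (((h.hasDerivAt₁ y).pow 2).const_mul (2 * (m ^ 2 + n ^ 2)))).sub_const (m ^ 2 + n ^ 2)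
  exact this.congr_deriv (by ring)

theorem hasDerivAt_firstIntegral₀ (h : IsSolution m n φ₀ φ₁ φ₂) (hN : n ^ 2 + m ^ 2 ≠ 0)
    (y : ℝ) :
    HasDerivAt (firstIntegral₀ m n φ₀)
      (2 * (n ^ 2 - m ^ 2) / (n ^ 2 + m ^ 2) * (φ₀ y * deriv φ₀ y) * quadricDefect m n φ₀ φ₁ y
        - 4 * n ^ 2 * (φ₀ y * deriv φ₀ y) * sphereDefect φ₀ φ₁ φ₂ y) y := by
  have := ((h.hasDerivAt_deriv₀ y).pow 2).sub
    (((((h.hasDerivAt₀ y).pow 4).const_mul (2 * n ^ 2 * m ^ 2 / (n ^ 2 + m ^ 2))).sub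
      (((h.hasDerivAt₀ y).pow 2).const_mul (m ^ 2 + n ^ 2))).add_const ((m ^ 2 + n ^ 2) / 2))
  refine this.congr_deriv ?_
  simp only [quadricDefect, sphereDefect]
  field_simp
  ring

theorem hasDerivAt_firstIntegral₁ (h : IsSolution m n φ₀ φ₁ φ₂) (y : ℝ) :
    HasDerivAt (firstIntegral₁ m n φ₁)
      (2 * (φ₁ y * deriv φ₁ y) * quadricDefect m n φ₀ φ₁ y
        - 4 * n ^ 2 * (φ₁ y * deriv φ₁ y) * sphereDefect φ₀ φ₁ φ₂ y) y := by
  have := ((h.hasDerivAt_deriv₁ y).pow 2).sub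
    (((((h.hasDerivAt₁ y).pow 4).const_mul (-2 * m ^ 2)).add
      (((h.hasDerivAt₁ y).pow 2).const_mul (2 * m ^ 2 - n ^ 2))).add_const ((n ^ 2 - m ^ 2) / 2))
  refine this.congr_deriv ?_
  simp only [quadricDefect, sphereDefect]
  ring

theorem hasDerivAt_firstIntegral₂ (h : IsSolution m n φ₀ φ₁ φ₂) (y : ℝ) :
    HasDerivAt (firstIntegral₂ m n φ₂)
      (4 * n ^ 2 * (φ₂ y * deriv φ₂ y) * sphereDefect φ₀ φ₁ φ₂ y
        - 2 * (φ₂ y * deriv φ₂ y) * quadricDefect m n φ₀ φ₁ y) y := by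
  have := ((h.hasDerivAt_deriv₂ y).pow 2).sub
    (((((h.hasDerivAt₂ y).pow 4).const_mul (-2 * n ^ 2)).add
      (((h.hasDerivAt₂ y).pow 2).const_mul (2 * n ^ 2 - m ^ 2))).add_const ((m ^ 2 - n ^ 2) / 2))
  refine this.congr_deriv ?_
  simp only [quadricDefect, sphereDefect]
  ring

theorem sphereDefect_eq_zero (h : IsSolution m n φ₀ φ₁ φ₂) {y₀ : ℝ}
    (hu : sphereDefect φ₀ φ₁ φ₂ y₀ = 0)
    (hv : φ₀ y₀ * deriv φ₀ y₀ + φ₁ y₀ * deriv φ₁ y₀ + φ₂ y₀ * deriv φ₂ y₀ = 0)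
    (hw : deriv φ₀ y₀ ^ 2 + deriv φ₁ y₀ ^ 2 + deriv φ₂ y₀ ^ 2
      = m ^ 2 * φ₁ y₀ ^ 2 + n ^ 2 * φ₂ y₀ ^ 2) :
    sphereDefect φ₀ φ₁ φ₂ = 0 := by
  set Q : ℝ → ℝ := fun y => m ^ 2 * φ₁ y ^ 2 + n ^ 2 * φ₂ y ^ 2
  set v : ℝ → ℝ := fun y => φ₀ y * deriv φ₀ y + φ₁ y * deriv φ₁ y + φ₂ y * deriv φ₂ y
  set w : ℝ → ℝ := fun y => deriv φ₀ y ^ 2 + deriv φ₁ y ^ 2 + deriv φ₂ y ^ 2 - Q y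
  have hv' (y : ℝ) : HasDerivAt v (w y - 2 * Q y * sphereDefect φ₀ φ₁ φ₂ y) y := by
    have := (((h.hasDerivAt₀ y).mul (h.hasDerivAt_deriv₀ y)).add
      ((h.hasDerivAt₁ y).mul (h.hasDerivAt_deriv₁ y))).add
      ((h.hasDerivAt₂ y).mul (h.hasDerivAt_deriv₂ y))
    exact this.congr_deriv (by simp only [w, Q, sphereDefect]; ring)
  have hw' (y : ℝ) : HasDerivAt w (-4 * Q y * v y) y := by
    have := (((((h.hasDerivAt_deriv₀ y).pow 2).add ((h.hasDerivAt_deriv₁ y).pow 2)).add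
      ((h.hasDerivAt_deriv₂ y).pow 2)).sub ((((h.hasDerivAt₁ y).pow 2).const_mul (m ^ 2)).add
      (((h.hasDerivAt₂ y).pow 2).const_mul (n ^ 2))))
    exact this.congr_deriv (by simp only [v, Q]; ring)
  have hQ : Continuous Q := by
    have := h.continuous₁
    have := h.continuous₂
    fun_prop
  have hzero := Matrix.eq_zero_of_hasDerivAt_mulVec
    (A := fun y => !![0, 2, 0; -2 * Q y, 0, 1; 0, -4 * Q y, 0]) (t₀ := y₀) (by fun_prop)
    (fun y => hasDerivAt_vec3_mulVec ((h.hasDerivAt_sphereDefect y).congr_deriv (by ring))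
      ((hv' y).congr_deriv (by ring)) ((hw' y).congr_deriv (by ring)))
    (by simp [hu, hv, hw, v, w, Q])
  funext y
  simpa using congrFun (congrFun hzero y) 0

theorem quadricDefect_eq_zero (h : IsSolution m n φ₀ φ₁ φ₂) (hN : n ^ 2 + m ^ 2 ≠ 0)
    (hsphere : sphereDefect φ₀ φ₁ φ₂ = 0)
    {y₀ : ℝ} (hs : quadricDefect m n φ₀ φ₁ y₀ = 0)
    (ht : n ^ 2 * (φ₀ y₀ * deriv φ₀ y₀) + (m ^ 2 + n ^ 2) * (φ₁ y₀ * deriv φ₁ y₀) = 0)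
    (ha : firstIntegral₀ m n φ₀ y₀ = 0) (hb : firstIntegral₁ m n φ₁ y₀ = 0) :
    quadricDefect m n φ₀ φ₁ = 0 := by
  set t : ℝ → ℝ := fun y =>
    4 * (n ^ 2 * (φ₀ y * deriv φ₀ y) + (m ^ 2 + n ^ 2) * (φ₁ y * deriv φ₁ y))
  set e : ℝ → ℝ := fun y =>
    4 * n ^ 2 * firstIntegral₀ m n φ₀ y + 4 * (m ^ 2 + n ^ 2) * firstIntegral₁ m n φ₁ y
  set k : ℝ → ℝ := fun y => 4 * n ^ 2 * (2 * m ^ 2 + n ^ 2) / (n ^ 2 + m ^ 2) * φ₀ y ^ 2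
    + 4 * (n ^ 2 - 2 * m ^ 2) * φ₁ y ^ 2 + (2 * m ^ 2 - 4 * n ^ 2)
  set j : ℝ → ℝ := fun y => 8 * n ^ 2 * (n ^ 2 - m ^ 2) / (n ^ 2 + m ^ 2) * (φ₀ y * deriv φ₀ y)
    + 8 * (m ^ 2 + n ^ 2) * (φ₁ y * deriv φ₁ y)
  have hu (y : ℝ) : sphereDefect φ₀ φ₁ φ₂ y = 0 := congrFun hsphere y
  have ht' (y : ℝ) : HasDerivAt t (e y + k y * quadricDefect m n φ₀ φ₁ y) y := by
    have := (((h.hasDerivAt₀ y).mul (h.hasDerivAt_deriv₀ y)).const_mul (n ^ 2)).add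
      (((h.hasDerivAt₁ y).mul (h.hasDerivAt_deriv₁ y)).const_mul (m ^ 2 + n ^ 2))
    refine (this.const_mul 4).congr_deriv ?_
    simp only [e, k, firstIntegral₀, firstIntegral₁, quadricDefect]
    have hu' := hu y
    unfold sphereDefect at hu'
    field_simp
    linear_combination
      -16 * n ^ 2 * (n ^ 2 + m ^ 2) * (n ^ 2 * φ₀ y ^ 2 + (m ^ 2 + n ^ 2) * φ₁ y ^ 2) * hu'
  have he' (y : ℝ) : HasDerivAt e (j y * quadricDefect m n φ₀ φ₁ y) y := by
    have := ((h.hasDerivAt_firstIntegral₀ hN y).const_mul (4 * n ^ 2)).add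
      ((h.hasDerivAt_firstIntegral₁ y).const_mul (4 * (m ^ 2 + n ^ 2)))
    refine this.congr_deriv ?_
    rw [hu y]
    ring
  obtain ⟨hk, hj⟩ : Continuous k ∧ Continuous j := by
    have := h.continuous₀
    have := h.continuous₁
    have := h.continuous_deriv₀
    have := h.continuous_deriv₁
    constructor <;> fun_prop
  have hzero := Matrix.eq_zero_of_hasDerivAt_mulVec
    (A := fun y => !![0, 1, 0; k y, 0, 1; j y, 0, 0]) (t₀ := y₀) (by fun_prop)
    (fun y => hasDerivAt_vec3_mulVec ((h.hasDerivAt_quadricDefect y).congr_deriv (by ring))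
      ((ht' y).congr_deriv (by ring)) ((he' y).congr_deriv (by ring)))
    (by simp [hs, ht, ha, hb, t, e])
  funext y
  simpa using congrFun (congrFun hzero y) 0

theorem firstIntegral₀_eq_zero (h : IsSolution m n φ₀ φ₁ φ₂) (hN : n ^ 2 + m ^ 2 ≠ 0)
    (hsphere : sphereDefect φ₀ φ₁ φ₂ = 0) (hquadric : quadricDefect m n φ₀ φ₁ = 0) {y₀ : ℝ}
    (h₀ : firstIntegral₀ m n φ₀ y₀ = 0) :
    firstIntegral₀ m n φ₀ = 0 :=
  eq_zero_of_norm_deriv_le (c := 0) (fun y => h.hasDerivAt_firstIntegral₀ hN y)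
    continuous_const (fun y => by simp [hsphere, hquadric]) h₀

theorem firstIntegral₁_eq_zero (h : IsSolution m n φ₀ φ₁ φ₂) (hsphere : sphereDefect φ₀ φ₁ φ₂ = 0)
    (hquadric : quadricDefect m n φ₀ φ₁ = 0) {y₀ : ℝ} (h₀ : firstIntegral₁ m n φ₁ y₀ = 0) :
    firstIntegral₁ m n φ₁ = 0 :=
  eq_zero_of_norm_deriv_le (c := 0) h.hasDerivAt_firstIntegral₁
    continuous_const (fun y => by simp [hsphere, hquadric]) h₀

theorem firstIntegral₂_eq_zero (h : IsSolution m n φ₀ φ₁ φ₂) (hsphere : sphereDefect φ₀ φ₁ φ₂ = 0)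
    (hquadric : quadricDefect m n φ₀ φ₁ = 0) {y₀ : ℝ} (h₀ : firstIntegral₂ m n φ₂ y₀ = 0) :
    firstIntegral₂ m n φ₂ = 0 :=
  eq_zero_of_norm_deriv_le (c := 0) h.hasDerivAt_firstIntegral₂
    continuous_const (fun y => by simp [hsphere, hquadric]) h₀

end IsSolution

end MinimalSurfaceODE

open MinimalSurfaceODE

/-- The minimal-surface ODE system with standard initial conditions integrates to an
uncoupled system of first-order equations. -/
theorem stmt_10 (n m : ℝ) (hm : 0 < m) (hmn : m < n) (φ₀ φ₁ φ₂ : ℝ → ℝ)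
    (hφ₀ : Differentiable ℝ φ₀) (hφ₀' : Differentiable ℝ (deriv φ₀))
    (hφ₁ : Differentiable ℝ φ₁) (hφ₁' : Differentiable ℝ (deriv φ₁))
    (hφ₂ : Differentiable ℝ φ₂) (hφ₂' : Differentiable ℝ (deriv φ₂))
    (ode₀ : ∀ y, deriv (deriv φ₀) y =
      -2 * (m ^ 2 * φ₁ y ^ 2 + n ^ 2 * φ₂ y ^ 2) * φ₀ y)
    (ode₁ : ∀ y, deriv (deriv φ₁) y =
      (m ^ 2 - 2 * (m ^ 2 * φ₁ y ^ 2 + n ^ 2 * φ₂ y ^ 2)) * φ₁ y)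
    (ode₂ : ∀ y, deriv (deriv φ₂) y =
      (n ^ 2 - 2 * (m ^ 2 * φ₁ y ^ 2 + n ^ 2 * φ₂ y ^ 2)) * φ₂ y)
    (init₀ : φ₀ 0 = Real.sqrt ((n ^ 2 + m ^ 2) / (2 * n ^ 2)))
    (init₁ : φ₁ 0 = 0)
    (init₂ : φ₂ 0 = Real.sqrt ((n ^ 2 - m ^ 2) / (2 * n ^ 2)))
    (init₀' : deriv φ₀ 0 = 0)
    (init₁' : deriv φ₁ 0 = Real.sqrt ((n ^ 2 - m ^ 2) / 2))
    (init₂' : deriv φ₂ 0 = 0) :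
    ∀ y : ℝ,
      (deriv φ₀ y) ^ 2 = (2 * n ^ 2 * m ^ 2 / (n ^ 2 + m ^ 2)) * φ₀ y ^ 4
        - (m ^ 2 + n ^ 2) * φ₀ y ^ 2 + (m ^ 2 + n ^ 2) / 2 ∧
      (deriv φ₁ y) ^ 2 = -2 * m ^ 2 * φ₁ y ^ 4
        + (2 * m ^ 2 - n ^ 2) * φ₁ y ^ 2 + (n ^ 2 - m ^ 2) / 2 ∧
      (deriv φ₂ y) ^ 2 = -2 * n ^ 2 * φ₂ y ^ 4
        + (2 * n ^ 2 - m ^ 2) * φ₂ y ^ 2 + (m ^ 2 - n ^ 2) / 2 := by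
  have hn : 0 < n := hm.trans hmn
  have hN : n ^ 2 + m ^ 2 ≠ 0 := by positivity
  have hnm : 0 ≤ n ^ 2 - m ^ 2 := by nlinarith
  have h : IsSolution m n φ₀ φ₁ φ₂ :=
    ⟨fun y => (hφ₀ y).hasDerivAt, fun y => (hφ₁ y).hasDerivAt, fun y => (hφ₂ y).hasDerivAt,
      fun y => ode₀ y ▸ (hφ₀' y).hasDerivAt, fun y => ode₁ y ▸ (hφ₁' y).hasDerivAt,
      fun y => ode₂ y ▸ (hφ₂' y).hasDerivAt⟩
  have sq₀ : φ₀ 0 ^ 2 = (n ^ 2 + m ^ 2) / (2 * n ^ 2) := by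
    rw [init₀, Real.sq_sqrt (by positivity)]
  have sq₂ : φ₂ 0 ^ 2 = (n ^ 2 - m ^ 2) / (2 * n ^ 2) := by
    rw [init₂, Real.sq_sqrt (by positivity)]
  have sq₁' : deriv φ₁ 0 ^ 2 = (n ^ 2 - m ^ 2) / 2 := by
    rw [init₁', Real.sq_sqrt (by positivity)]
  have hsphere := h.sphereDefect_eq_zero (y₀ := 0)
    (by rw [sphereDefect, sq₀, sq₂, init₁]; field_simp; ring)
    (by rw [init₀', init₁, init₂']; ring)
    (by rw [init₀', init₂', sq₁', sq₂, init₁]; field_simp; ring)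
  have ha : firstIntegral₀ m n φ₀ 0 = 0 := by
    rw [firstIntegral₀, init₀', show φ₀ 0 ^ 4 = (φ₀ 0 ^ 2) ^ 2 by ring, sq₀]
    field_simp
    ring
  have hb : firstIntegral₁ m n φ₁ 0 = 0 := by rw [firstIntegral₁, sq₁', init₁]; ring
  have hc : firstIntegral₂ m n φ₂ 0 = 0 := by
    rw [firstIntegral₂, init₂', show φ₂ 0 ^ 4 = (φ₂ 0 ^ 2) ^ 2 by ring, sq₂]
    field_simp
    ring
  have hquadric := h.quadricDefect_eq_zero hN hsphere (y₀ := 0)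
    (by rw [quadricDefect, sq₀, init₁]; field_simp; ring) (by rw [init₀', init₁]; ring) ha hb
  intro y
  exact ⟨sub_eq_zero.1 (congrFun (h.firstIntegral₀_eq_zero hN hsphere hquadric ha) y),
    sub_eq_zero.1 (congrFun (h.firstIntegral₁_eq_zero hsphere hquadric hb) y),
    sub_eq_zero.1 (congrFun (h.firstIntegral₂_eq_zero hsphere hquadric hc) y)⟩
end

section
/- There exists a not-identically-zero solution z of the Hill equation z'' + q z = 0 satisfying z(y + 2b) = z(y) for all y if and only if (z₁(b) + z₂'(b))² = 4. -/
/-!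
A solution of `z'' + q z = 0` is determined by its state `(z y, z' y)`, and by uniqueness for
the linear first-order system the state at `y` is the fundamental matrix `Φ(y)` applied to the
state at `0`. Periodicity of `q` turns this into `state (y + b) = Φ(y) (state b)`, so the state
at `2b` is `M² (state 0)` with monodromy matrix `M = Φ(b)`, and a solution is `2b`-periodic
exactly when its initial state is a fixed vector of `M²`. The Wronskian gives `det M = 1`,
so `det (M² - 1) = det (M - 1) det (M + 1) = (2 - tr M)(2 + tr M)`, which vanishes iff
`(tr M)² = 4`.
-/

open Set Function Matrix

theorem Matrix.det_sq_sub_one_fin_two {R : Type*} [CommRing R] (M : Matrix (Fin 2) (Fin 2) R) :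
    (M ^ 2 - 1).det = (1 + M.det) ^ 2 - M.trace ^ 2 := by
  simp only [sq, det_fin_two, sub_apply, mul_apply, Fin.sum_univ_two, one_apply_eq, ne_eq,
    zero_ne_one, one_ne_zero, not_false_eq_true, one_apply_ne, sub_zero, trace_fin_two]
  ring

theorem Matrix.exists_sq_mulVec_eq_self_iff {K : Type*} [Field K] (M : Matrix (Fin 2) (Fin 2) K)
    (hM : M.det = 1) : (∃ v ≠ 0, M ^ 2 *ᵥ v = v) ↔ M.trace ^ 2 = 4 := by
  have hfix (v : Fin 2 → K) : M ^ 2 *ᵥ v = v ↔ (M ^ 2 - 1) *ᵥ v = 0 := by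
    rw [sub_mulVec, one_mulVec, sub_eq_zero]
  simp_rw [hfix, exists_mulVec_eq_zero_iff, det_sq_sub_one_fin_two, hM, sub_eq_zero, eq_comm]
  norm_num

theorem lipschitzWith_prodMk_snd_mul_fst (a : ℝ) :
    LipschitzWith (max 1 ‖a‖₊) (fun p : ℝ × ℝ => (p.2, a * p.1)) := by
  have : LipschitzWith (max 1 (‖a‖₊ * 1)) (fun p : ℝ × ℝ => (p.2, a * p.1)) :=
    LipschitzWith.prod_snd.prodMk ((lipschitzWith_smul a).comp LipschitzWith.prod_fst)
  rwa [mul_one] at this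

namespace Hill

def IsSolution (q z : ℝ → ℝ) : Prop :=
  Differentiable ℝ z ∧ Differentiable ℝ (deriv z) ∧ ∀ y, deriv (deriv z) y + q y * z y = 0

noncomputable def state (z : ℝ → ℝ) (y : ℝ) : Fin 2 → ℝ := ![z y, deriv z y]

noncomputable def fundamentalMatrix (z₁ z₂ : ℝ → ℝ) (y : ℝ) : Matrix (Fin 2) (Fin 2) ℝ :=
  !![z₁ y, z₂ y; deriv z₁ y, deriv z₂ y]

variable {q z w z₁ z₂ : ℝ → ℝ}

theorem IsSolution.hasDerivAt (hz : IsSolution q z) (t : ℝ) :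
    HasDerivAt (fun t => (z t, deriv z t)) (deriv z t, -q t * z t) t := by
  have hz'' : deriv (deriv z) t = -q t * z t := by linarith [hz.2.2 t]
  exact (hz.1 t).hasDerivAt.prodMk (hz'' ▸ (hz.2.1 t).hasDerivAt)

theorem IsSolution.eq_of_state_eq (hq : Continuous q) (hz : IsSolution q z) (hw : IsSolution q w)
    {t₀ : ℝ} (h : state z t₀ = state w t₀) : z = w := by
  funext y
  -- `(z, z')` solves `p' = (p.2, -q t * p.1)`, Lipschitz in `p` uniformly for `t` in a compact set
  set R := max |y| |t₀| + 1
  have mem_Ioo {t : ℝ} (ht : |t| ≤ max |y| |t₀|) : t ∈ Ioo (-R) R := by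
    constructor <;> linarith [abs_le.mp ht]
  obtain ⟨C, hC⟩ := (isCompact_Icc (a := -R) (b := R)).exists_bound_of_continuousOn hq.continuousOn
  have hlip (t : ℝ) (ht : t ∈ Ioo (-R) R) :
      LipschitzWith (max 1 C.toNNReal) (fun p : ℝ × ℝ => (p.2, -q t * p.1)) := by
    refine (lipschitzWith_prodMk_snd_mul_fst _).weaken (max_le_max le_rfl ?_)
    rw [nnnorm_neg, ← NNReal.coe_le_coe, coe_nnnorm]
    exact (hC t (Ioo_subset_Icc_self ht)).trans (Real.le_coe_toNNReal C)
  have h₀ : (z t₀, deriv z t₀) = (w t₀, deriv w t₀) :=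
    Prod.ext (congrFun h 0) (congrFun h 1)
  have := ODE_solution_unique_of_mem_Ioo (s := fun _ => univ)
    (fun t ht => (hlip t ht).lipschitzOnWith) (mem_Ioo (le_max_right _ _))
    (fun t _ => ⟨hz.hasDerivAt t, trivial⟩) (fun t _ => ⟨hw.hasDerivAt t, trivial⟩) h₀
    (mem_Ioo (le_max_left _ _))
  exact congrArg Prod.fst this

theorem isSolution_zero : IsSolution q 0 := by
  refine ⟨differentiable_const 0, ?_, fun y => ?_⟩ <;> simp

theorem state_zero (y : ℝ) : state 0 y = 0 := by
  ext i; fin_cases i <;> simp [state]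

theorem IsSolution.add (hz : IsSolution q z) (hw : IsSolution q w) : IsSolution q (z + w) := by
  have hd : deriv (z + w) = deriv z + deriv w := funext fun y => deriv_add (hz.1 y) (hw.1 y)
  refine ⟨hz.1.add hw.1, hd ▸ hz.2.1.add hw.2.1, fun y => ?_⟩
  rw [hd, deriv_add (hz.2.1 y) (hw.2.1 y)]
  simp only [Pi.add_apply]
  linear_combination hz.2.2 y + hw.2.2 y

theorem IsSolution.const_smul (c : ℝ) (hz : IsSolution q z) : IsSolution q (c • z) := by
  have hd : deriv (c • z) = c • deriv z := funext fun y => deriv_const_smul c (hz.1 y)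
  refine ⟨hz.1.const_smul c, hd ▸ hz.2.1.const_smul c, fun y => ?_⟩
  rw [hd, deriv_const_smul c (hz.2.1 y)]
  simp only [Pi.smul_apply, smul_eq_mul]
  linear_combination c * hz.2.2 y

theorem IsSolution.comp_add_const {T : ℝ} (hT : Periodic q T) (hz : IsSolution q z) :
    IsSolution q (fun y => z (y + T)) := by
  have hd : deriv (fun y => z (y + T)) = fun y => deriv z (y + T) :=
    funext fun y => deriv_comp_add_const z T y
  refine ⟨hz.1.comp (differentiable_id.add_const T), ?_, fun y => ?_⟩
  · rw [hd]; exact hz.2.1.comp (differentiable_id.add_const T)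
  · rw [hd, deriv_comp_add_const (deriv z) T y, ← hT y]
    exact hz.2.2 (y + T)

theorem state_comp_add_const (T y : ℝ) : state (fun y => z (y + T)) y = state z (y + T) := by
  simp [state, deriv_comp_add_const]

theorem state_smul_add_smul (h₁ : Differentiable ℝ z₁) (h₂ : Differentiable ℝ z₂)
    (v : Fin 2 → ℝ) (y : ℝ) :
    state (v 0 • z₁ + v 1 • z₂) y = fundamentalMatrix z₁ z₂ y *ᵥ v := by
  have hd : deriv (v 0 • z₁ + v 1 • z₂) y = v 0 * deriv z₁ y + v 1 * deriv z₂ y := by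
    rw [deriv_add ((h₁ y).const_smul _) ((h₂ y).const_smul _), deriv_const_smul _ (h₁ y),
      deriv_const_smul _ (h₂ y)]
    simp
  ext i; fin_cases i <;> simp [state, fundamentalMatrix, hd, mulVec, dotProduct, mul_comm]

theorem det_fundamentalMatrix_eq (h₁ : IsSolution q z₁) (h₂ : IsSolution q z₂) (y t : ℝ) :
    (fundamentalMatrix z₁ z₂ y).det = (fundamentalMatrix z₁ z₂ t).det := by
  simp only [fundamentalMatrix, det_fin_two_of]
  refine is_const_of_deriv_eq_zero ((h₁.1.mul h₂.2.1).sub (h₂.1.mul h₁.2.1)) (fun s => ?_) y t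
  rw [(((h₁.1 s).hasDerivAt.mul (h₂.2.1 s).hasDerivAt).sub
    ((h₂.1 s).hasDerivAt.mul (h₁.2.1 s).hasDerivAt)).deriv]
  linear_combination z₁ s * h₂.2.2 s - z₂ s * h₁.2.2 s

structure IsCanonicalFundamentalSystem (q z₁ z₂ : ℝ → ℝ) : Prop where
  isSolution_left : IsSolution q z₁
  isSolution_right : IsSolution q z₂
  fundamentalMatrix_zero : fundamentalMatrix z₁ z₂ 0 = 1

theorem IsCanonicalFundamentalSystem.det_fundamentalMatrix
    (hF : IsCanonicalFundamentalSystem q z₁ z₂) (y : ℝ) : (fundamentalMatrix z₁ z₂ y).det = 1 := by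
  rw [det_fundamentalMatrix_eq hF.isSolution_left hF.isSolution_right y 0, hF.fundamentalMatrix_zero,
    det_one]

theorem IsCanonicalFundamentalSystem.isSolution_smul_add_smul
    (hF : IsCanonicalFundamentalSystem q z₁ z₂) (v : Fin 2 → ℝ) :
    IsSolution q (v 0 • z₁ + v 1 • z₂) :=
  (hF.isSolution_left.const_smul _).add (hF.isSolution_right.const_smul _)

theorem IsCanonicalFundamentalSystem.state_smul_add_smul_zero
    (hF : IsCanonicalFundamentalSystem q z₁ z₂) (v : Fin 2 → ℝ) :
    state (v 0 • z₁ + v 1 • z₂) 0 = v := by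
  rw [state_smul_add_smul hF.isSolution_left.1 hF.isSolution_right.1, hF.fundamentalMatrix_zero,
    one_mulVec]

variable (hq : Continuous q)
include hq

theorem IsSolution.eq_zero_iff_state_eq_zero (hz : IsSolution q z) (t : ℝ) :
    z = 0 ↔ state z t = 0 :=
  ⟨fun h => h ▸ state_zero t,
    fun h => hz.eq_of_state_eq hq isSolution_zero (h.trans (state_zero t).symm)⟩

theorem IsSolution.state_eq_fundamentalMatrix_mulVec (hF : IsCanonicalFundamentalSystem q z₁ z₂)
    (hz : IsSolution q z) (y : ℝ) : state z y = fundamentalMatrix z₁ z₂ y *ᵥ state z 0 := by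
  have hrepr : state z 0 0 • z₁ + state z 0 1 • z₂ = z :=
    (hF.isSolution_smul_add_smul _).eq_of_state_eq hq hz (hF.state_smul_add_smul_zero _)
  rw [← state_smul_add_smul hF.isSolution_left.1 hF.isSolution_right.1, hrepr]

theorem IsSolution.state_add_period (hF : IsCanonicalFundamentalSystem q z₁ z₂) {T : ℝ}
    (hT : Periodic q T) (hz : IsSolution q z) (y : ℝ) :
    state z (y + T) = fundamentalMatrix z₁ z₂ y *ᵥ state z T := by
  rw [← state_comp_add_const, (hz.comp_add_const hT).state_eq_fundamentalMatrix_mulVec hq hF,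
    state_comp_add_const, zero_add]

theorem IsSolution.state_natCast_mul_period (hF : IsCanonicalFundamentalSystem q z₁ z₂) {T : ℝ}
    (hT : Periodic q T) (hz : IsSolution q z) (n : ℕ) :
    state z (n * T) = fundamentalMatrix z₁ z₂ T ^ n *ᵥ state z 0 := by
  induction n with
  | zero => simp
  | succ n ih =>
    rw [Nat.cast_succ, add_one_mul, add_comm, hz.state_add_period hq hF (hT.nat_mul n), ih,
      mulVec_mulVec, pow_succ']

theorem IsSolution.periodic_iff_state_eq {T : ℝ} (hT : Periodic q T) (hz : IsSolution q z) :
    Periodic z T ↔ state z T = state z 0 := by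
  constructor
  · intro h
    rw [← zero_add T, ← state_comp_add_const, show (fun y => z (y + T)) = z from funext h]
  · intro h
    refine congrFun ((hz.comp_add_const hT).eq_of_state_eq hq hz (t₀ := 0) ?_)
    rw [state_comp_add_const, zero_add, h]

theorem exists_periodic_solution_iff (hF : IsCanonicalFundamentalSystem q z₁ z₂) {T : ℝ}
    (hT : Periodic q T) (n : ℕ) :
    (∃ z, IsSolution q z ∧ z ≠ 0 ∧ Periodic z (n * T)) ↔
      ∃ v ≠ 0, fundamentalMatrix z₁ z₂ T ^ n *ᵥ v = v := by
  constructor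
  · rintro ⟨z, hz, hz0, hper⟩
    refine ⟨state z 0, (hz.eq_zero_iff_state_eq_zero hq 0).not.mp hz0, ?_⟩
    rw [← hz.state_natCast_mul_period hq hF hT, (hz.periodic_iff_state_eq hq (hT.nat_mul n)).mp hper]
  · rintro ⟨v, hv0, hv⟩
    have hz := hF.isSolution_smul_add_smul v
    refine ⟨_, hz, ?_, ?_⟩
    · rwa [Ne, hz.eq_zero_iff_state_eq_zero hq 0, hF.state_smul_add_smul_zero]
    · rw [hz.periodic_iff_state_eq hq (hT.nat_mul n), hz.state_natCast_mul_period hq hF hT,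
        hF.state_smul_add_smul_zero, hv]

end Hill

open Hill in
theorem stmt_12_general (b : ℝ) (q : ℝ → ℝ) (hq : Continuous q)
    (hqper : ∀ y, q (y + b) = q y)
    (z₁ z₂ : ℝ → ℝ)
    (hz₁ : Differentiable ℝ z₁) (hz₁' : Differentiable ℝ (deriv z₁))
    (hz₂ : Differentiable ℝ z₂) (hz₂' : Differentiable ℝ (deriv z₂))
    (ode₁ : ∀ y, deriv (deriv z₁) y + q y * z₁ y = 0)
    (ode₂ : ∀ y, deriv (deriv z₂) y + q y * z₂ y = 0)
    (init₁ : z₁ 0 = 1) (init₁' : deriv z₁ 0 = 0)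
    (init₂ : z₂ 0 = 0) (init₂' : deriv z₂ 0 = 1)
    :
    (∃ z : ℝ → ℝ, Differentiable ℝ z ∧ Differentiable ℝ (deriv z) ∧
        (∀ y, deriv (deriv z) y + q y * z y = 0) ∧ z ≠ 0 ∧
        (∀ y, z (y + 2 * b) = z y)) ↔
      (z₁ b + deriv z₂ b) ^ 2 = 4 := by
  have hF : IsCanonicalFundamentalSystem q z₁ z₂ := by
    refine ⟨⟨hz₁, hz₁', ode₁⟩, ⟨hz₂, hz₂', ode₂⟩, ?_⟩
    rw [fundamentalMatrix, init₁, init₁', init₂, init₂', one_fin_two]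
  have htrace : (fundamentalMatrix z₁ z₂ b).trace = z₁ b + deriv z₂ b := by
    simp [fundamentalMatrix, trace_fin_two]
  have key := exists_periodic_solution_iff hq hF hqper 2
  rw [Nat.cast_ofNat, exists_sq_mulVec_eq_self_iff _ (hF.det_fundamentalMatrix b), htrace] at key
  simp only [IsSolution, and_assoc] at key
  exact key

/-- The Hill equation has a nonzero solution of period `2b` iff the discriminant
`(z₁(b) + z₂'(b))² = 4`. -/
theorem stmt_12 (b : ℝ) (hb : 0 < b) (q : ℝ → ℝ) (hq : Continuous q)
    (hqper : ∀ y, q (y + b) = q y)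
    (z₁ z₂ : ℝ → ℝ)
    (hz₁ : Differentiable ℝ z₁) (hz₁' : Differentiable ℝ (deriv z₁))
    (hz₂ : Differentiable ℝ z₂) (hz₂' : Differentiable ℝ (deriv z₂))
    (ode₁ : ∀ y, deriv (deriv z₁) y + q y * z₁ y = 0)
    (ode₂ : ∀ y, deriv (deriv z₂) y + q y * z₂ y = 0)
    (init₁ : z₁ 0 = 1) (init₁' : deriv z₁ 0 = 0)
    (init₂ : z₂ 0 = 0) (init₂' : deriv z₂ 0 = 1)
    :
    (∃ z : ℝ → ℝ, Differentiable ℝ z ∧ Differentiable ℝ (deriv z) ∧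
        (∀ y, deriv (deriv z) y + q y * z y = 0) ∧ z ≠ 0 ∧
        (∀ y, z (y + 2 * b) = z y)) ↔
      (z₁ b + deriv z₂ b) ^ 2 = 4 :=
  stmt_12_general b q hq hqper z₁ z₂ hz₁ hz₁' hz₂ hz₂' ode₁ ode₂ init₁ init₁' init₂ init₂'
end

section
/- For all real numbers n > m > 0: ∫₀^{2π} (m² + n² − 2m²cos²(t)) / sqrt(n² − m²cos²(t)) dt = 4(n+m) ∫₀^{π/2} sqrt(1 − (4mn/(n+m)²) sin²(t)) dt. (Equivalently, in terms of complete elliptic integrals, 4n[((m²/n²) − 1)K(m/n) + 2E(m/n)] = 4(n+m)E(2·sqrt(mn)/(m+n)), a Landen-type transformation identity used to compute the area of the bipolar surface.) -/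
/-!
The left-hand integrand depends on `t` only through `cos² t`, so by periodicity and symmetry
the integral over `[0, 2π]` is four times the integral of the same expression in `sin² θ`
over `[0, π/2]`. On the right, Landen's substitution
`sin φ = (n + m) sin θ / (n + m sin² θ)` maps `[0, π/2]` onto itself and turns
`(n + m) √(1 - k² sin² φ) dφ`, with `k² = 4mn/(n+m)²`, into the left-hand integrand plus
`2m` times the derivative of `sin θ cos θ √(n² - m² sin² θ) / (n + m sin² θ)`, a function that
vanishes at both endpoints.
-/

open Real Set intervalIntegral

theorem integral_comp_cos_sq_zero_two_pi {h : ℝ → ℝ} (hh : ContinuousOn h (Icc 0 1)) :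
    ∫ t in (0:ℝ)..2 * π, h (cos t ^ 2) = 4 * ∫ t in (0:ℝ)..π / 2, h (sin t ^ 2) := by
  set f : ℝ → ℝ := fun t => h (cos t ^ 2)
  have hf : Continuous f :=
    hh.comp_continuous (by fun_prop) fun t => ⟨sq_nonneg _, cos_sq_le_one t⟩
  have hper : Function.Periodic f π := fun t => by simp only [f, cos_add_pi, neg_sq]
  have hsymm : ∫ t in π / 2..π, f t = ∫ t in (0:ℝ)..π / 2, f t := by
    simpa [f, cos_pi_sub, sub_half] using (integral_comp_sub_left f π (a := 0) (b := π / 2)).symm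
  have hflip : ∫ t in (0:ℝ)..π / 2, f t = ∫ t in (0:ℝ)..π / 2, h (sin t ^ 2) := by
    simpa [f, cos_pi_div_two_sub] using
      (integral_comp_sub_left f (π / 2) (a := 0) (b := π / 2)).symm
  calc ∫ t in (0:ℝ)..2 * π, f t = 2 * ∫ t in (0:ℝ)..π, f t := by
        simpa [two_mul] using hper.intervalIntegral_add_zsmul_eq 2 0 (hf.intervalIntegrable)
    _ = 2 * ((∫ t in (0:ℝ)..π / 2, f t) + ∫ t in π / 2..π, f t) := by
        rw [integral_add_adjacent_intervals (hf.intervalIntegrable _ _) (hf.intervalIntegrable _ _)]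
    _ = 4 * ∫ t in (0:ℝ)..π / 2, h (sin t ^ 2) := by rw [hsymm, hflip]; ring

namespace Landen

noncomputable section

variable {n m x θ : ℝ}

def radicand (n m θ : ℝ) : ℝ := n ^ 2 - m ^ 2 * sin θ ^ 2

def denom (n m θ : ℝ) : ℝ := n + m * sin θ ^ 2

def angle (n m θ : ℝ) : ℝ := arcsin ((n + m) * sin θ / denom n m θ)

def angleDeriv (n m θ : ℝ) : ℝ :=
  (n + m) * (n - m * sin θ ^ 2) / (denom n m θ * √(radicand n m θ))

def correction (n m θ : ℝ) : ℝ := sin θ * cos θ * √(radicand n m θ) / denom n m θ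

def correctionDeriv (n m θ : ℝ) : ℝ :=
  ((cos θ ^ 2 - sin θ ^ 2) * radicand n m θ * denom n m θ
      - m ^ 2 * sin θ ^ 2 * cos θ ^ 2 * denom n m θ
      - 2 * m * sin θ ^ 2 * cos θ ^ 2 * radicand n m θ)
    / (√(radicand n m θ) * denom n m θ ^ 2)

lemma abs_mul_lt (h : |m| < n) (hx : x ∈ Icc (0 : ℝ) 1) : |m * x| < n := by
  rw [abs_mul, abs_of_nonneg hx.1]
  nlinarith [abs_nonneg m, hx.2]

lemma sq_sub_sq_mul_pos (h : |m| < n) (hx : x ∈ Icc (0 : ℝ) 1) : 0 < n ^ 2 - m ^ 2 * x := by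
  nlinarith [sq_abs m, abs_nonneg m, hx.1, hx.2]

lemma sin_sq_mem_Icc (θ : ℝ) : sin θ ^ 2 ∈ Icc (0 : ℝ) 1 := ⟨sq_nonneg _, sin_sq_le_one θ⟩

lemma radicand_pos (h : |m| < n) (θ : ℝ) : 0 < radicand n m θ :=
  sq_sub_sq_mul_pos h (sin_sq_mem_Icc θ)

lemma denom_pos (h : |m| < n) (θ : ℝ) : 0 < denom n m θ := by
  have := (abs_lt.1 (abs_mul_lt h (sin_sq_mem_Icc θ))).1
  unfold denom; linarith

lemma sub_mul_sin_sq_pos (h : |m| < n) (θ : ℝ) : 0 < n - m * sin θ ^ 2 := by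
  have := (abs_lt.1 (abs_mul_lt h (sin_sq_mem_Icc θ))).2
  linarith

lemma one_sub_sq_sin_angle_arg (h : |m| < n) (θ : ℝ) :
    1 - ((n + m) * sin θ / denom n m θ) ^ 2
      = (cos θ * √(radicand n m θ) / denom n m θ) ^ 2 := by
  have hV := (denom_pos h θ).ne'
  simp only [div_pow, mul_pow, sq_sqrt (radicand_pos h θ).le, cos_sq']
  unfold radicand denom at hV ⊢
  field_simp
  ring

lemma sin_angle (h : |m| < n) (θ : ℝ) :
    sin (angle n m θ) = (n + m) * sin θ / denom n m θ := by
  have hsq : ((n + m) * sin θ / denom n m θ) ^ 2 ≤ 1 := by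
    nlinarith [one_sub_sq_sin_angle_arg h θ, sq_nonneg (cos θ * √(radicand n m θ) / denom n m θ)]
  have habs := abs_le.1 (sq_le_one_iff_abs_le_one _ |>.1 hsq)
  exact sin_arcsin habs.1 habs.2

lemma sqrt_one_sub_sin_sq_angle (h : |m| < n) (θ : ℝ) :
    √(1 - 4 * m * n / (n + m) ^ 2 * sin (angle n m θ) ^ 2)
      = (n - m * sin θ ^ 2) / denom n m θ := by
  have hV := denom_pos h θ
  have hnm : n + m ≠ 0 := by linarith [neg_abs_le m]
  rw [sin_angle h, ← sqrt_sq (div_nonneg (sub_mul_sin_sq_pos h θ).le hV.le)]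
  congr 1
  unfold denom at hV ⊢
  field_simp
  ring

lemma add_mul_sqrt_one_sub_sin_sq_angle_mul_angleDeriv (h : |m| < n) (θ : ℝ) :
    (n + m) * (√(1 - 4 * m * n / (n + m) ^ 2 * sin (angle n m θ) ^ 2) * angleDeriv n m θ)
      = (m ^ 2 + n ^ 2 - 2 * m ^ 2 * sin θ ^ 2) / √(n ^ 2 - m ^ 2 * sin θ ^ 2)
        + 2 * m * correctionDeriv n m θ := by
  have hV := (denom_pos h θ).ne'
  have hq := (sqrt_pos.2 (radicand_pos h θ)).ne'
  have hq2 := sq_sqrt (radicand_pos h θ).le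
  change _ = _ / √(radicand n m θ) + _
  rw [sqrt_one_sub_sin_sq_angle h, angleDeriv, correctionDeriv, cos_sq']
  set q := √(radicand n m θ)
  rw [← hq2]
  unfold denom at hV ⊢
  unfold radicand at hq2
  field_simp
  linear_combination (4 * n * m * sin θ ^ 2 - 2 * n * m + 2 * m ^ 2 * sin θ ^ 2) * hq2

@[fun_prop]
lemma continuous_radicand : Continuous (radicand n m) := by unfold radicand; fun_prop

@[fun_prop]
lemma continuous_denom : Continuous (denom n m) := by unfold denom; fun_prop

lemma continuous_angle (h : |m| < n) : Continuous (angle n m) :=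
  continuous_arcsin.comp <|
    (by fun_prop : Continuous fun θ => (n + m) * sin θ).div continuous_denom
      fun θ => (denom_pos h θ).ne'

lemma continuous_angleDeriv (h : |m| < n) : Continuous (angleDeriv n m) := by
  exact Continuous.div (by fun_prop) (by fun_prop)
    fun θ => (mul_pos (denom_pos h θ) (sqrt_pos.2 (radicand_pos h θ))).ne'

lemma continuous_correctionDeriv (h : |m| < n) : Continuous (correctionDeriv n m) := by
  exact Continuous.div (by fun_prop) (by fun_prop)
    fun θ => (mul_pos (sqrt_pos.2 (radicand_pos h θ)) (pow_pos (denom_pos h θ) 2)).ne'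

lemma hasDerivAt_radicand (θ : ℝ) :
    HasDerivAt (radicand n m) (-(m ^ 2 * (2 * sin θ * cos θ))) θ := by
  unfold radicand
  simpa using (((hasDerivAt_sin θ).pow 2).const_mul (m ^ 2)).const_sub (n ^ 2)

lemma hasDerivAt_denom (θ : ℝ) : HasDerivAt (denom n m) (m * (2 * sin θ * cos θ)) θ := by
  unfold denom
  simpa using (((hasDerivAt_sin θ).pow 2).const_mul m).const_add n

lemma hasDerivAt_correction (h : |m| < n) (θ : ℝ) :
    HasDerivAt (correction n m) (correctionDeriv n m θ) θ := by
  have hB := radicand_pos h θ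
  have hV := denom_pos h θ
  have hsqrt := (hasDerivAt_radicand θ).sqrt hB.ne'
  have := (((hasDerivAt_sin θ).mul (hasDerivAt_cos θ)).mul hsqrt).div (hasDerivAt_denom θ) hV.ne'
  refine this.congr_deriv ?_
  simp only [Pi.mul_apply, correctionDeriv]
  set q := √(radicand n m θ)
  rw [← sq_sqrt hB.le]
  field_simp
  ring

lemma hasDerivAt_angle (h : |m| < n) (hθ : 0 < cos θ) :
    HasDerivAt (angle n m) (angleDeriv n m θ) θ := by
  have hV := denom_pos h θ
  have hq := sqrt_pos.2 (radicand_pos h θ)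
  have hone := one_sub_sq_sin_angle_arg h θ
  have hlt : ((n + m) * sin θ / denom n m θ) ^ 2 < 1 := by
    have : 0 < (cos θ * √(radicand n m θ) / denom n m θ) ^ 2 := by positivity
    linarith
  have habs := abs_lt.1 (sq_lt_one_iff_abs_lt_one _ |>.1 hlt)
  have := (hasDerivAt_arcsin habs.1.ne' habs.2.ne).comp θ
    (((hasDerivAt_sin θ).const_mul (n + m)).div (hasDerivAt_denom θ) hV.ne')
  refine this.congr_deriv ?_
  rw [hone, sqrt_sq (by positivity), angleDeriv]
  unfold denom at hV ⊢
  field_simp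
  ring

lemma angle_zero : angle n m 0 = 0 := by simp [angle]

lemma angle_pi_div_two (h : n + m ≠ 0) : angle n m (π / 2) = π / 2 := by
  simp [angle, denom, h]

lemma correction_zero : correction n m 0 = 0 := by simp [correction]

lemma correction_pi_div_two : correction n m (π / 2) = 0 := by simp [correction]

theorem add_mul_integral_sqrt_one_sub_mul_sin_sq (h : |m| < n) :
    (n + m) * ∫ t in (0 : ℝ)..π / 2, √(1 - 4 * m * n / (n + m) ^ 2 * sin t ^ 2)
      = ∫ t in (0 : ℝ)..π / 2,
          (m ^ 2 + n ^ 2 - 2 * m ^ 2 * sin t ^ 2) / √(n ^ 2 - m ^ 2 * sin t ^ 2) := by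
  set g : ℝ → ℝ := fun u => √(1 - 4 * m * n / (n + m) ^ 2 * sin u ^ 2)
  set f : ℝ → ℝ := fun t => (m ^ 2 + n ^ 2 - 2 * m ^ 2 * sin t ^ 2) / √(n ^ 2 - m ^ 2 * sin t ^ 2)
  have hf : Continuous f :=
    Continuous.div (by fun_prop) (by fun_prop) fun θ => (sqrt_pos.2 (radicand_pos h θ)).ne'
  have hsubst : ∫ u in (0 : ℝ)..π / 2, g u
      = ∫ θ in (0 : ℝ)..π / 2, (g ∘ angle n m) θ * angleDeriv n m θ := by
    rw [integral_comp_mul_deriv'' (continuous_angle h).continuousOn _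
      (continuous_angleDeriv h).continuousOn (by fun_prop : Continuous g).continuousOn,
      angle_zero, angle_pi_div_two (by linarith [neg_abs_le m])]
    intro θ hθ
    rw [min_eq_left (by positivity), max_eq_right (by positivity)] at hθ
    have hcos : 0 < cos θ := cos_pos_of_mem_Ioo ⟨by linarith [hθ.1, pi_pos], hθ.2⟩
    exact (hasDerivAt_angle h hcos).hasDerivWithinAt
  have hcorrection : ∫ θ in (0 : ℝ)..π / 2, correctionDeriv n m θ = 0 := by
    rw [integral_eq_sub_of_hasDerivAt (fun θ _ => hasDerivAt_correction h θ)
      ((continuous_correctionDeriv h).intervalIntegrable _ _), correction_pi_div_two,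
      correction_zero, sub_zero]
  calc (n + m) * ∫ u in (0 : ℝ)..π / 2, g u
      = ∫ θ in (0 : ℝ)..π / 2, (n + m) * ((g ∘ angle n m) θ * angleDeriv n m θ) := by
        rw [hsubst, integral_const_mul]
    _ = ∫ θ in (0 : ℝ)..π / 2, (f θ + 2 * m * correctionDeriv n m θ) :=
        integral_congr fun θ _ => add_mul_sqrt_one_sub_sin_sq_angle_mul_angleDeriv h θ
    _ = ∫ θ in (0 : ℝ)..π / 2, f θ := by
        rw [integral_add (hf.intervalIntegrable _ _)
          (((continuous_correctionDeriv h).intervalIntegrable _ _).const_mul _),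
          integral_const_mul, hcorrection, mul_zero, add_zero]

end

end Landen

/-- A Landen-type transformation identity:
`∫₀^{2π} (m² + n² − 2m²cos²t)/sqrt(n² − m²cos²t) dt
  = 4(n+m) ∫₀^{π/2} sqrt(1 − (4mn/(n+m)²) sin²t) dt`. -/
theorem stmt_19 (n m : ℝ) (hm : 0 < m) (hmn : m < n) :
    (∫ t in (0:ℝ)..(2 * π),
        (m ^ 2 + n ^ 2 - 2 * m ^ 2 * Real.cos t ^ 2)
          / Real.sqrt (n ^ 2 - m ^ 2 * Real.cos t ^ 2)) =
      4 * (n + m) * ∫ t in (0:ℝ)..(π / 2),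
        Real.sqrt (1 - (4 * m * n / (n + m) ^ 2) * Real.sin t ^ 2) := by
  have h : |m| < n := abs_lt.2 ⟨by linarith, hmn⟩
  have hcont : ContinuousOn (fun x => (m ^ 2 + n ^ 2 - 2 * m ^ 2 * x) / √(n ^ 2 - m ^ 2 * x))
      (Icc 0 1) :=
    ContinuousOn.div (by fun_prop) (by fun_prop) fun x hx =>
      (sqrt_pos.2 (Landen.sq_sub_sq_mul_pos h hx)).ne'
  rw [integral_comp_cos_sq_zero_two_pi hcont, mul_assoc,
    Landen.add_mul_integral_sqrt_one_sub_mul_sin_sq h]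
end
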